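/- arXiv:1610.04085 — 7 statements merged into one kernel-verified Lean document; each statement's English description precedes it below -/
import Mathlib

section
/- The following are equivalent: (i) for every decreasing sequence (A_n) ⊆ 𝔉 with ⋂_{n} A_n = ∅ one has sup_{P∈𝒫} P(A_n) → 0 as n → ∞; (ii) every linear functional l : ℒ^∞ → ℝ for which there exists a constant C with |l(f)| ≤ C · sup_{P∈𝒫} E_P[|f|] for all f ∈ ℒ^∞ admits a finite signed measure μ on (Ω, 𝔉) such that l(f) = ∫ f dμ for all f ∈ ℒ^∞. -/
/-!
(i) ⇒ (ii): for a bounded functional `l`, the set function `ν A = l 1_A` is finitely additive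
with `|ν A| ≤ |C| c(A)`, where `c(A) = sup_{P ∈ 𝒫} P(A)`. Hence `ν` and its positive variation
`ν⁺ A = sup_{B ⊆ A} ν B` inherit continuity at `∅` from `c`, so `ν⁺` and `ν⁺ - ν` extend to
finite measures. Integration against their difference agrees with `l` on indicators, hence
everywhere, because the span of indicators is uniformly dense in `ℒ^∞`.

(ii) ⇒ (i): if `c(A_n) > ε` along `A_n ↓ ∅`, pick `P_n ∈ 𝒫` with `P_n(A_n) > ε` and let
`l f` be the limit of `E_{P_n}[f]` along a free ultrafilter. Then `l` is bounded, so
`l f = ∫ f dμ` for a signed measure `μ`; but `μ(A_m) = l 1_{A_m} ≥ ε` for every `m`,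
contradicting countable additivity of `μ`.
-/

open MeasureTheory Filter Topology Set

/-- The submodule of bounded measurable real-valued functions (ℒ^∞). -/
def boundedMeasurable (Ω : Type*) [MeasurableSpace Ω] : Submodule ℝ (Ω → ℝ) where
  carrier := {f | Measurable f ∧ ∃ K : ℝ, ∀ ω, |f ω| ≤ K}
  add_mem' := by
    rintro f g ⟨hf, K₁, hK₁⟩ ⟨hg, K₂, hK₂⟩
    exact ⟨hf.add hg, K₁ + K₂, fun ω =>
      (abs_add_le _ _).trans (add_le_add (hK₁ ω) (hK₂ ω))⟩
  zero_mem' := ⟨measurable_const, 0, fun ω => by simp⟩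
  smul_mem' := by
    rintro c f ⟨hf, K, hK⟩
    refine ⟨(hf.const_mul c : Measurable fun ω => c * f ω), |c| * K, fun ω => ?_⟩
    simp only [Pi.smul_apply, smul_eq_mul, abs_mul]
    exact mul_le_mul_of_nonneg_left (hK ω) (abs_nonneg c)

/-- Integral of a function against a finite signed measure, via the Jordan decomposition. -/
noncomputable def sInt {Ω : Type*} [MeasurableSpace Ω] (μ : SignedMeasure Ω) (f : Ω → ℝ) : ℝ :=
  (∫ ω, f ω ∂μ.toJordanDecomposition.posPart) - ∫ ω, f ω ∂μ.toJordanDecomposition.negPart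

/-- A signed measure is dominated by the capacity `c = sup_{P ∈ Pr} P`. -/
def sDomC {Ω : Type*} [MeasurableSpace Ω] (Pr : Set (Measure Ω)) (μ : SignedMeasure Ω) : Prop :=
  ∀ A : Set Ω, MeasurableSet A → (∀ P ∈ Pr, P A = 0) → μ A = 0

/-- A (nonnegative) measure is dominated by the capacity `c = sup_{P ∈ Pr} P`. -/
def mDomC {Ω : Type*} [MeasurableSpace Ω] (Pr : Set (Measure Ω)) (μ : Measure Ω) : Prop :=
  ∀ A : Set Ω, MeasurableSet A → (∀ P ∈ Pr, P A = 0) → μ A = 0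

/-- `ca_c`: the space of finite signed measures dominated by `c`, as a submodule. -/
def caC (Ω : Type*) [MeasurableSpace Ω] (Pr : Set (Measure Ω)) :
    Submodule ℝ (SignedMeasure Ω) where
  carrier := {μ | sDomC Pr μ}
  add_mem' := by
    intro μ ν hμ hν A hA h0
    rw [MeasureTheory.VectorMeasure.add_apply, hμ A hA h0, hν A hA h0, add_zero]
  zero_mem' := by intro A hA h0; rfl
  smul_mem' := by
    intro c μ hμ A hA h0
    rw [MeasureTheory.VectorMeasure.smul_apply, hμ A hA h0, smul_zero]

/-- The weak topology `τ = σ(ℒ^∞, ca_c)` on `ℒ^∞`. -/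
noncomputable def tauTop (Ω : Type*) [MeasurableSpace Ω] (Pr : Set (Measure Ω)) :
    TopologicalSpace (boundedMeasurable Ω) :=
  ⨅ μ : caC Ω Pr, TopologicalSpace.induced (fun f => sInt μ.1 f.1) inferInstance

/-- A property holds `Pr`-quasi surely if it holds `P`-a.s. for every `P ∈ Pr`. -/
def QS {Ω : Type*} [MeasurableSpace Ω] (Pr : Set (Measure Ω)) (p : Ω → Prop) : Prop :=
  ∀ P ∈ Pr, ∀ᵐ ω ∂P, p ω

/-- `Pr`-sensitivity of a subset of `ℒ^∞`. -/
def PSensitive {Ω : Type*} [MeasurableSpace Ω] (Pr : Set (Measure Ω))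
    (𝒜 : Set (boundedMeasurable Ω)) : Prop :=
  ∃ 𝒬 : Set (Measure Ω), (∀ Q ∈ 𝒬, IsProbabilityMeasure Q ∧ mDomC Pr Q) ∧
    ∀ X : boundedMeasurable Ω,
      (∀ Q ∈ 𝒬, ∃ Y ∈ 𝒜, X.1 =ᵐ[Q] Y.1) → X ∈ 𝒜

/-- Fatou closedness of a subset of `ℒ^∞`. -/
def FatouClosed {Ω : Type*} [MeasurableSpace Ω] (Pr : Set (Measure Ω))
    (𝒜 : Set (boundedMeasurable Ω)) : Prop :=
  ∀ (X : ℕ → boundedMeasurable Ω) (X₀ : boundedMeasurable Ω),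
    (∀ n, X n ∈ 𝒜) →
    (∃ K : ℝ, 0 ≤ K ∧ ∀ n, QS Pr fun ω => |(X n).1 ω| ≤ K) →
    (QS Pr fun ω => Tendsto (fun n => (X n).1 ω) atTop (𝓝 (X₀.1 ω))) →
    X₀ ∈ 𝒜

/-- Hypothesis (D): every norm-continuous linear functional on `ca_c` is represented by
integration against some element of `ℒ^∞`. -/
def HypD (Ω : Type*) [MeasurableSpace Ω] (Pr : Set (Measure Ω)) : Prop :=
  ∀ l : caC Ω Pr →ₗ[ℝ] ℝ,
    (∃ C : ℝ, ∀ μ : caC Ω Pr, |l μ| ≤ C * (μ.1.totalVariation Set.univ).toReal) →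
    ∃ X : boundedMeasurable Ω, ∀ μ : caC Ω Pr, l μ = sInt μ.1 X.1

open scoped ENNReal

section BoundedMeasurable

variable {Ω : Type*} [MeasurableSpace Ω]

lemma integrable_of_mem_boundedMeasurable (f : boundedMeasurable Ω) (μ : Measure Ω)
    [IsFiniteMeasure μ] : Integrable f.1 μ := by
  obtain ⟨hf, K, hK⟩ := f.2
  exact (integrable_const K).mono' hf.aestronglyMeasurable (.of_forall hK)

lemma integral_abs_le_of_abs_le {μ : Measure Ω} [IsProbabilityMeasure μ] {f : Ω → ℝ} {K : ℝ}
    (hK : ∀ ω, |f ω| ≤ K) : ∫ ω, |f ω| ∂μ ≤ K := by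
  have h := norm_integral_le_of_norm_le_const (μ := μ) (f := fun ω => |f ω|)
    (.of_forall (by simpa using hK))
  simpa using (le_abs_self _).trans h

noncomputable def indicatorBM {A : Set Ω} (hA : MeasurableSet A) : boundedMeasurable Ω :=
  ⟨A.indicator 1, measurable_one.indicator hA, 1, fun ω => by
    by_cases h : ω ∈ A <;> simp [h]⟩

lemma indicatorBM_union {A B : Set Ω} (hA : MeasurableSet A) (hB : MeasurableSet B)
    (hAB : Disjoint A B) : indicatorBM (hA.union hB) = indicatorBM hA + indicatorBM hB :=
  Subtype.ext (indicator_union_of_disjoint hAB 1)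

lemma integral_indicatorBM (μ : Measure Ω) {A : Set Ω} (hA : MeasurableSet A) :
    ∫ ω, (indicatorBM hA).1 ω ∂μ = μ.real A :=
  integral_indicator_one hA

lemma integral_abs_indicatorBM (μ : Measure Ω) {A : Set Ω} (hA : MeasurableSet A) :
    ∫ ω, |(indicatorBM hA).1 ω| ∂μ = μ.real A := by
  have h_abs : ∀ ω, |(indicatorBM hA).1 ω| = (indicatorBM hA).1 ω := fun ω =>
    abs_of_nonneg (indicator_nonneg (fun _ _ => zero_le_one) ω)
  simp_rw [h_abs]
  exact integral_indicatorBM μ hA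

lemma sInt_indicatorBM (μ : SignedMeasure Ω) {A : Set Ω} (hA : MeasurableSet A) :
    sInt μ (indicatorBM hA).1 = μ A := by
  conv_rhs => rw [← μ.toSignedMeasure_toJordanDecomposition]
  rw [JordanDecomposition.toSignedMeasure, Measure.toSignedMeasure_sub_apply hA, sInt,
    integral_indicatorBM, integral_indicatorBM]

noncomputable def sIntₗ (μ : SignedMeasure Ω) : boundedMeasurable Ω →ₗ[ℝ] ℝ where
  toFun f := sInt μ f.1
  map_add' f g := by
    simp only [sInt, Submodule.coe_add, Pi.add_apply,
      integral_add (integrable_of_mem_boundedMeasurable f _)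
        (integrable_of_mem_boundedMeasurable g _)]
    ring
  map_smul' c f := by
    simp only [sInt, Submodule.coe_smul, Pi.smul_apply, smul_eq_mul, integral_const_mul,
      RingHom.id_apply]
    ring

end BoundedMeasurable

section SupNorm

variable {Ω : Type*} [MeasurableSpace Ω]

def SupNormBounded (T : boundedMeasurable Ω →ₗ[ℝ] ℝ) : Prop :=
  ∃ M, ∀ (f : boundedMeasurable Ω) (K : ℝ), 0 ≤ K → (∀ ω, |f.1 ω| ≤ K) → |T f| ≤ M * K

lemma SupNormBounded.sub {S T : boundedMeasurable Ω →ₗ[ℝ] ℝ} (hS : SupNormBounded S)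
    (hT : SupNormBounded T) : SupNormBounded (S - T) := by
  obtain ⟨M, hM⟩ := hS
  obtain ⟨N, hN⟩ := hT
  refine ⟨M + N, fun f K hK hfK => ?_⟩
  calc |(S - T) f| ≤ |S f| + |T f| := abs_sub _ _
    _ ≤ M * K + N * K := add_le_add (hM f K hK hfK) (hN f K hK hfK)
    _ = (M + N) * K := (add_mul M N K).symm

lemma supNormBounded_sIntₗ (μ : SignedMeasure Ω) : SupNormBounded (sIntₗ μ) := by
  refine ⟨μ.toJordanDecomposition.posPart.real univ + μ.toJordanDecomposition.negPart.real univ,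
    fun f K _ hfK => ?_⟩
  have hint : ∀ ν : Measure Ω, [IsFiniteMeasure ν] → |∫ ω, f.1 ω ∂ν| ≤ K * ν.real univ :=
    fun ν _ => by
      simpa using norm_integral_le_of_norm_le_const (μ := ν) (f := f.1) (.of_forall hfK)
  calc |sIntₗ μ f| ≤ |∫ ω, f.1 ω ∂μ.toJordanDecomposition.posPart|
        + |∫ ω, f.1 ω ∂μ.toJordanDecomposition.negPart| := abs_sub _ _
    _ ≤ _ := by
      linarith [hint μ.toJordanDecomposition.posPart, hint μ.toJordanDecomposition.negPart]

/-- The approximant is `ε ⌊f / ε⌋`. -/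
lemma exists_mem_span_indicatorBM_abs_sub_le (f : boundedMeasurable Ω) {ε : ℝ} (hε : 0 < ε) :
    ∃ g ∈ Submodule.span ℝ (range fun A : {A : Set Ω // MeasurableSet A} => indicatorBM A.2),
      ∀ ω, |f.1 ω - g.1 ω| ≤ ε := by
  obtain ⟨hf, K, hK⟩ := f.2
  obtain ⟨N, hN⟩ := exists_nat_gt (K / ε)
  set k : Ω → ℤ := fun ω => ⌊f.1 ω / ε⌋
  have hA : ∀ n : ℤ, MeasurableSet (k ⁻¹' {n}) :=
    fun n => (hf.div_const ε).floor (measurableSet_singleton n)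
  refine ⟨∑ n ∈ Finset.Icc (-N : ℤ) N, (ε * n) • indicatorBM (hA n),
    Submodule.sum_mem _ fun n _ => Submodule.smul_mem _ _ (Submodule.subset_span ⟨⟨_, hA n⟩, rfl⟩),
    fun ω => ?_⟩
  have hfε : |f.1 ω / ε| < N := by
    rw [abs_div, abs_of_pos hε, div_lt_iff₀ hε]
    exact (hK ω).trans_lt ((div_lt_iff₀ hε).1 hN)
  have hkω : k ω ∈ Finset.Icc (-N : ℤ) N := Finset.mem_Icc.2
    ⟨Int.le_floor.2 (by push_cast; linarith [neg_abs_le (f.1 ω / ε)]),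
      Int.floor_le_iff.2 (by push_cast; linarith [le_abs_self (f.1 ω / ε)])⟩
  have hg : (∑ n ∈ Finset.Icc (-N : ℤ) N, (ε * n) • indicatorBM (hA n)).1 ω = ε * k ω := by
    simp only [indicatorBM, Submodule.coe_sum, Submodule.coe_smul, Finset.sum_apply,
      Pi.smul_apply, smul_eq_mul]
    rw [Finset.sum_eq_single_of_mem (k ω) hkω]
    · simp
    · intro n _ hn
      simp [Ne.symm hn]
  have hfrac : f.1 ω - ε * k ω = ε * Int.fract (f.1 ω / ε) := by
    rw [← Int.self_sub_floor, mul_sub, mul_div_cancel₀ _ hε.ne']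
  rw [hg, hfrac, abs_of_nonneg (mul_nonneg hε.le (Int.fract_nonneg _))]
  exact mul_le_of_le_one_right hε.le (Int.fract_lt_one _).le

lemma SupNormBounded.eq_of_indicatorBM {S T : boundedMeasurable Ω →ₗ[ℝ] ℝ}
    (hS : SupNormBounded S) (hT : SupNormBounded T)
    (h : ∀ A (hA : MeasurableSet A), S (indicatorBM hA) = T (indicatorBM hA)) : S = T := by
  obtain ⟨M, hM⟩ := hS.sub hT
  have h_span : Submodule.span ℝ (range fun A : {A : Set Ω // MeasurableSet A} => indicatorBM A.2)
      ≤ LinearMap.ker (S - T) :=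
    Submodule.span_le.2 (by rintro _ ⟨A, rfl⟩; simp [h A A.2])
  ext f
  have hsmall : ∀ ε > 0, |(S - T) f| ≤ M * ε := by
    intro ε hε
    obtain ⟨g, hg, hfg⟩ := exists_mem_span_indicatorBM_abs_sub_le f hε
    rw [← sub_zero ((S - T) f), ← LinearMap.mem_ker.1 (h_span hg), ← map_sub]
    exact hM _ ε hε.le hfg
  have hlim : Tendsto (fun ε => M * ε) (𝓝[>] 0) (𝓝 0) := by
    simpa using (tendsto_id.const_mul M).mono_left (nhdsWithin_le_nhds (a := (0 : ℝ)))
  have := ge_of_tendsto hlim (eventually_nhdsWithin_of_forall hsmall)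
  simpa [sub_eq_zero] using abs_nonpos_iff.1 this

end SupNorm

section SetFunction

variable {Ω : Type*} [MeasurableSpace Ω]

theorem exists_measure_of_additive {m : Set Ω → ℝ} (hm_nonneg : ∀ s, MeasurableSet s → 0 ≤ m s)
    (hm_add : ∀ s t, MeasurableSet s → MeasurableSet t → Disjoint s t → m (s ∪ t) = m s + m t)
    (hm_cont : ∀ s : ℕ → Set Ω, (∀ n, MeasurableSet (s n)) → Antitone s → ⋂ n, s n = ∅ →
      Tendsto (fun n => m (s n)) atTop (𝓝 0)) :
    ∃ μ : Measure Ω, IsFiniteMeasure μ ∧ ∀ s, MeasurableSet s → μ.real s = m s := by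
  have hC : IsSetRing {s : Set Ω | MeasurableSet s} :=
    ⟨.empty, fun _ _ => .union, fun _ _ => .diff⟩
  have hm_empty : m ∅ = 0 := by simpa using hm_add ∅ ∅ .empty .empty (disjoint_empty _)
  let c : AddContent ℝ≥0∞ {s : Set Ω | MeasurableSet s} :=
    hC.addContent_of_union (fun s => ENNReal.ofReal (m s)) (by simp [hm_empty])
      fun hs ht hst => by
        simp only [hm_add _ _ hs ht hst, ENNReal.ofReal_add (hm_nonneg _ hs) (hm_nonneg _ ht)]
  have hc_cont : ∀ ⦃s : ℕ → Set Ω⦄, (∀ n, s n ∈ {s | MeasurableSet s}) → Antitone s →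
      ⋂ n, s n = ∅ → Tendsto (fun n => c (s n)) atTop (𝓝 0) := fun s hs hanti hempty => by
    rw [← ENNReal.ofReal_zero]
    exact ENNReal.tendsto_ofReal (hm_cont s hs hanti hempty)
  let μ : Measure Ω := Measure.ofMeasurable (fun s _ => c s) (by simp) fun f hf hd =>
    addContent_iUnion_eq_sum_of_tendsto_zero hC c (fun _ _ => ENNReal.ofReal_ne_top) hc_cont hf
      (.iUnion hf) hd
  refine ⟨μ, ⟨?_⟩, fun s hs => ?_⟩
  · rw [Measure.ofMeasurable_apply _ .univ]
    exact ENNReal.ofReal_lt_top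
  · rw [measureReal_def, Measure.ofMeasurable_apply _ hs]
    exact ENNReal.toReal_ofReal (hm_nonneg s hs)

noncomputable def posVariation (ν : Set Ω → ℝ) (s : Set Ω) : ℝ :=
  ⨆ t : {t : Set Ω // MeasurableSet t ∧ t ⊆ s}, ν t

instance (s : Set Ω) : Nonempty {t : Set Ω // MeasurableSet t ∧ t ⊆ s} :=
  ⟨⟨∅, .empty, empty_subset s⟩⟩

variable {ν : Set Ω → ℝ} {s t : Set Ω}

lemma le_posVariation (hν : BddAbove (ν '' {t | MeasurableSet t})) (ht : MeasurableSet t)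
    (hts : t ⊆ s) : ν t ≤ posVariation ν s :=
  le_ciSup (f := fun t : {t : Set Ω // MeasurableSet t ∧ t ⊆ s} => ν t)
    (hν.mono (by rintro _ ⟨u, rfl⟩; exact ⟨u, u.2.1, rfl⟩)) ⟨t, ht, hts⟩

lemma posVariation_le {b : ℝ} (h : ∀ t, MeasurableSet t → t ⊆ s → ν t ≤ b) :
    posVariation ν s ≤ b :=
  ciSup_le fun t => h t t.2.1 t.2.2

lemma posVariation_nonneg (hν : BddAbove (ν '' {t | MeasurableSet t})) (hν_empty : ν ∅ = 0) :
    0 ≤ posVariation ν s :=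
  hν_empty ▸ le_posVariation hν .empty (empty_subset s)

lemma posVariation_union (hν : BddAbove (ν '' {t | MeasurableSet t}))
    (hν_add : ∀ s t, MeasurableSet s → MeasurableSet t → Disjoint s t → ν (s ∪ t) = ν s + ν t)
    (hs : MeasurableSet s) (ht : MeasurableSet t) (hst : Disjoint s t) :
    posVariation ν (s ∪ t) = posVariation ν s + posVariation ν t := by
  apply le_antisymm
  · refine posVariation_le fun u hu hust => ?_
    have hu_split : u = (u ∩ s) ∪ (u ∩ t) := by
      rw [← inter_union_distrib_left, inter_eq_left.2 hust]
    rw [hu_split, hν_add _ _ (hu.inter hs) (hu.inter ht)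
      (hst.mono inter_subset_right inter_subset_right)]
    exact add_le_add (le_posVariation hν (hu.inter hs) inter_subset_right)
      (le_posVariation hν (hu.inter ht) inter_subset_right)
  · refine ciSup_add_ciSup_le fun u v => ?_
    rw [← hν_add _ _ u.2.1 v.2.1 (hst.mono u.2.2 v.2.2)]
    exact le_posVariation hν (u.2.1.union v.2.1) (union_subset_union u.2.2 v.2.2)

/-- Jordan decomposition `ν = ν⁺ - (ν⁺ - ν)`: both parts inherit continuity at `∅` from `w`. -/
theorem exists_signedMeasure_of_abs_le {w : Set Ω → ℝ}
    (hν_add : ∀ s t, MeasurableSet s → MeasurableSet t → Disjoint s t → ν (s ∪ t) = ν s + ν t)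
    (hνw : ∀ s, MeasurableSet s → |ν s| ≤ w s) (hw : Monotone w)
    (hw_cont : ∀ s : ℕ → Set Ω, (∀ n, MeasurableSet (s n)) → Antitone s → ⋂ n, s n = ∅ →
      Tendsto (fun n => w (s n)) atTop (𝓝 0)) :
    ∃ μ : SignedMeasure Ω, ∀ s, MeasurableSet s → μ s = ν s := by
  have hν_empty : ν ∅ = 0 := by simpa using hν_add ∅ ∅ .empty .empty (disjoint_empty _)
  have hν_le : ∀ s t, MeasurableSet s → s ⊆ t → ν s ≤ w t :=
    fun s t hs hst => (le_abs_self _).trans ((hνw s hs).trans (hw hst))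
  have hν : BddAbove (ν '' {t | MeasurableSet t}) :=
    ⟨w univ, by rintro _ ⟨t, ht, rfl⟩; exact hν_le t univ ht (subset_univ t)⟩
  have hpos_le : ∀ s, posVariation ν s ≤ w s := fun s => posVariation_le fun t ht hts =>
    hν_le t s ht hts
  obtain ⟨μp, _, hμp⟩ := exists_measure_of_additive (m := posVariation ν)
    (fun s _ => posVariation_nonneg hν hν_empty)
    (fun s t hs ht hst => posVariation_union hν hν_add hs ht hst)
    fun s hs hanti hempty => tendsto_of_tendsto_of_tendsto_of_le_of_le tendsto_const_nhds
      (hw_cont s hs hanti hempty) (fun n => posVariation_nonneg hν hν_empty) fun n => hpos_le _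
  obtain ⟨μm, _, hμm⟩ := exists_measure_of_additive (m := posVariation ν - ν)
    (fun s hs => sub_nonneg.2 (le_posVariation hν hs subset_rfl))
    (fun s t hs ht hst => by
      simp only [Pi.sub_apply, posVariation_union hν hν_add hs ht hst, hν_add s t hs ht hst]
      ring)
    fun s hs hanti hempty => by
      refine tendsto_of_tendsto_of_tendsto_of_le_of_le tendsto_const_nhds
        (by simpa using (hw_cont s hs hanti hempty).const_mul 2)
        (fun n => sub_nonneg.2 (le_posVariation hν (hs n) subset_rfl)) fun n => ?_
      rw [Pi.sub_apply]
      linarith [hpos_le (s n), hνw (s n) (hs n), neg_abs_le (ν (s n))]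
  refine ⟨μp.toSignedMeasure - μm.toSignedMeasure, fun s hs => ?_⟩
  rw [Measure.toSignedMeasure_sub_apply hs, hμp s hs, hμm s hs, Pi.sub_apply, sub_sub_cancel]

end SetFunction

section Capacity

variable {Ω : Type*} [MeasurableSpace Ω] {Pr : Set (Measure Ω)}

lemma iSup_measure_ne_top (hprob : ∀ P ∈ Pr, IsProbabilityMeasure P) (A : Set Ω) :
    ⨆ P ∈ Pr, P A ≠ ⊤ :=
  ne_top_of_le_ne_top ENNReal.one_ne_top (iSup₂_le fun P hP => have := hprob P hP; prob_le_one)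

lemma measureReal_le_toReal_iSup (hprob : ∀ P ∈ Pr, IsProbabilityMeasure P) {P : Measure Ω}
    (hP : P ∈ Pr) (A : Set Ω) : P.real A ≤ (⨆ Q ∈ Pr, Q A).toReal :=
  ENNReal.toReal_mono (iSup_measure_ne_top hprob A) (le_iSup₂ (f := fun Q _ => Q A) P hP)

lemma integral_abs_le_iSup (hprob : ∀ P ∈ Pr, IsProbabilityMeasure P) (f : boundedMeasurable Ω)
    {P : Measure Ω} (hP : P ∈ Pr) : ∫ ω, |f.1 ω| ∂P ≤ ⨆ Q : Pr, ∫ ω, |f.1 ω| ∂(Q.1) := by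
  obtain ⟨-, K, hK⟩ := f.2
  refine le_ciSup (f := fun Q : Pr => ∫ ω, |f.1 ω| ∂(Q.1)) ⟨K, ?_⟩ ⟨P, hP⟩
  rintro _ ⟨Q, rfl⟩
  have := hprob Q Q.2
  exact integral_abs_le_of_abs_le hK

lemma abs_le_of_forall_integral_abs_le {l : boundedMeasurable Ω →ₗ[ℝ] ℝ} {C : ℝ}
    (hC : ∀ f, |l f| ≤ C * ⨆ P : Pr, ∫ ω, |f.1 ω| ∂(P.1)) (f : boundedMeasurable Ω) {t : ℝ}
    (ht : 0 ≤ t) (hft : ∀ P ∈ Pr, ∫ ω, |f.1 ω| ∂P ≤ t) : |l f| ≤ |C| * t :=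
  calc |l f| ≤ C * ⨆ P : Pr, ∫ ω, |f.1 ω| ∂(P.1) := hC f
    _ ≤ |C| * ⨆ P : Pr, ∫ ω, |f.1 ω| ∂(P.1) := mul_le_mul_of_nonneg_right (le_abs_self C)
        (Real.iSup_nonneg fun _ => integral_nonneg fun _ => abs_nonneg _)
    _ ≤ |C| * t := mul_le_mul_of_nonneg_left (Real.iSup_le (fun P => hft P.1 P.2) ht) (abs_nonneg C)

theorem exists_signedMeasure_repr_of_tendsto (hprob : ∀ P ∈ Pr, IsProbabilityMeasure P)
    (hcont : ∀ A : ℕ → Set Ω, (∀ n, MeasurableSet (A n)) → Antitone A → (⋂ n, A n) = ∅ →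
      Tendsto (fun n => ⨆ P ∈ Pr, P (A n)) atTop (𝓝 0))
    (l : boundedMeasurable Ω →ₗ[ℝ] ℝ)
    (hl : ∃ C : ℝ, ∀ f : boundedMeasurable Ω, |l f| ≤ C * ⨆ P : Pr, ∫ ω, |f.1 ω| ∂(P.1)) :
    ∃ μ : SignedMeasure Ω, ∀ f : boundedMeasurable Ω, l f = sInt μ f.1 := by
  classical
  obtain ⟨C, hC⟩ := hl
  have hl_bdd : SupNormBounded l := ⟨|C|, fun f K hK hfK =>
    abs_le_of_forall_integral_abs_le hC f hK fun P hP =>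
      have := hprob P hP; integral_abs_le_of_abs_le hfK⟩
  let ν : Set Ω → ℝ := fun A => if hA : MeasurableSet A then l (indicatorBM hA) else 0
  have hν : ∀ A (hA : MeasurableSet A), ν A = l (indicatorBM hA) := fun A hA => dif_pos hA
  obtain ⟨μ, hμ⟩ := exists_signedMeasure_of_abs_le (ν := ν)
    (w := fun A => |C| * (⨆ P ∈ Pr, P A).toReal)
    (fun s t hs ht hst => by
      rw [hν _ (hs.union ht), hν s hs, hν t ht, indicatorBM_union hs ht hst, map_add])
    (fun A hA => by
      rw [hν A hA]
      exact abs_le_of_forall_integral_abs_le hC _ ENNReal.toReal_nonneg fun P hP =>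
        (integral_abs_indicatorBM P hA).trans_le (measureReal_le_toReal_iSup hprob hP A))
    (fun s t hst => mul_le_mul_of_nonneg_left (ENNReal.toReal_mono (iSup_measure_ne_top hprob t)
      (iSup₂_mono fun _ _ => measure_mono hst)) (abs_nonneg C))
    fun s hs hanti hempty => by
      simpa using ((ENNReal.tendsto_toReal ENNReal.zero_ne_top).comp
        (hcont s hs hanti hempty)).const_mul |C|
  refine ⟨μ, fun f => LinearMap.congr_fun
    (hl_bdd.eq_of_indicatorBM (supNormBounded_sIntₗ μ) fun A hA => ?_) f⟩
  rw [← hν A hA, ← hμ A hA]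
  exact (sInt_indicatorBM μ hA).symm

lemma exists_pos_forall_lt_of_not_tendsto {s : ℕ → ℝ≥0∞} (hs : Antitone s)
    (h : ¬Tendsto s atTop (𝓝 0)) : ∃ ε > 0, ∀ n, ε < s n := by
  rw [ENNReal.tendsto_atTop_zero] at h
  push Not at h
  obtain ⟨ε, hε, hεs⟩ := h
  exact ⟨ε, hε, fun n => let ⟨_, hnm, hm⟩ := hεs n; hm.trans_le (hs hnm)⟩

lemma exists_tendsto_ultrafilter_of_abs_le {ι : Type*} (U : Ultrafilter ι) {x : ι → ℝ} {K : ℝ}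
    (hx : ∀ i, |x i| ≤ K) : ∃ a, Tendsto x U (𝓝 a) := by
  obtain ⟨a, -, ha⟩ := isCompact_Icc.ultrafilter_le_nhds (U.map x) (by
    rw [Ultrafilter.coe_map, le_principal_iff]
    exact mem_map.2 (univ_mem' fun i => abs_le.1 (hx i)))
  exact ⟨a, by rwa [Ultrafilter.coe_map] at ha⟩

section UltraIntegral

variable {ι : Type*} (U : Ultrafilter ι) (P : ι → Measure Ω) [∀ i, IsProbabilityMeasure (P i)]

lemma tendsto_integral_limUnder (f : boundedMeasurable Ω) :
    Tendsto (fun i => ∫ ω, f.1 ω ∂P i) U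
      (𝓝 (limUnder (U : Filter ι) fun i => ∫ ω, f.1 ω ∂P i)) := by
  obtain ⟨-, K, hK⟩ := f.2
  exact tendsto_nhds_limUnder (exists_tendsto_ultrafilter_of_abs_le U fun i =>
    abs_integral_le_integral_abs.trans (integral_abs_le_of_abs_le hK))

noncomputable def ultraIntegral : boundedMeasurable Ω →ₗ[ℝ] ℝ where
  toFun f := limUnder (U : Filter ι) fun i => ∫ ω, f.1 ω ∂P i
  map_add' f g := tendsto_nhds_unique (tendsto_integral_limUnder U P (f + g))
    (((tendsto_integral_limUnder U P f).add (tendsto_integral_limUnder U P g)).congr fun _ =>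
      (integral_add (integrable_of_mem_boundedMeasurable f _)
        (integrable_of_mem_boundedMeasurable g _)).symm)
  map_smul' c f := tendsto_nhds_unique (tendsto_integral_limUnder U P (c • f))
    (((tendsto_integral_limUnder U P f).const_mul c).congr fun _ => (integral_const_mul c _).symm)

lemma tendsto_ultraIntegral (f : boundedMeasurable Ω) :
    Tendsto (fun i => ∫ ω, f.1 ω ∂P i) U (𝓝 (ultraIntegral U P f)) :=
  tendsto_integral_limUnder U P f

lemma abs_ultraIntegral_le (f : boundedMeasurable Ω) {b : ℝ}
    (hb : ∀ i, ∫ ω, |f.1 ω| ∂P i ≤ b) : |ultraIntegral U P f| ≤ b := by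
  have hf : ∀ i, |∫ ω, f.1 ω ∂P i| ≤ b := fun i => abs_integral_le_integral_abs.trans (hb i)
  exact abs_le.2 ⟨ge_of_tendsto' (tendsto_ultraIntegral U P f) fun i => (abs_le.1 (hf i)).1,
    le_of_tendsto' (tendsto_ultraIntegral U P f) fun i => (abs_le.1 (hf i)).2⟩

end UltraIntegral

theorem tendsto_of_signedMeasure_repr (hprob : ∀ P ∈ Pr, IsProbabilityMeasure P)
    (hrepr : ∀ l : boundedMeasurable Ω →ₗ[ℝ] ℝ,
      (∃ C : ℝ, ∀ f : boundedMeasurable Ω, |l f| ≤ C * ⨆ P : Pr, ∫ ω, |f.1 ω| ∂(P.1)) →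
      ∃ μ : SignedMeasure Ω, ∀ f : boundedMeasurable Ω, l f = sInt μ f.1)
    {A : ℕ → Set Ω} (hA : ∀ n, MeasurableSet (A n)) (hanti : Antitone A)
    (hempty : (⋂ n, A n) = ∅) : Tendsto (fun n => ⨆ P ∈ Pr, P (A n)) atTop (𝓝 0) := by
  by_contra hnot
  obtain ⟨ε, hε, hεA⟩ := exists_pos_forall_lt_of_not_tendsto
    (fun m n hmn => iSup₂_mono fun P _ => measure_mono (hanti hmn)) hnot
  choose P hP hPA using fun n => lt_biSup_iff.1 (hεA n)
  have := fun n => hprob _ (hP n)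
  set L := ultraIntegral (hyperfilter ℕ) P
  obtain ⟨μ, hμ⟩ := hrepr L ⟨1, fun f => by
    rw [one_mul]
    exact abs_ultraIntegral_le _ P f fun n => integral_abs_le_iSup hprob f (hP n)⟩
  have hε_top : ε ≠ ⊤ := ne_top_of_lt (hPA 0)
  have hL_ge : ∀ m, ε.toReal ≤ L (indicatorBM (hA m)) := fun m =>
    ge_of_tendsto (tendsto_ultraIntegral _ P _) <| Nat.hyperfilter_le_atTop <|
      (eventually_ge_atTop m).mono fun n hmn => by
        rw [integral_indicatorBM]
        exact ENNReal.toReal_mono (measure_ne_top _ _) ((hPA n).le.trans (measure_mono (hanti hmn)))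
  have hL_lim : Tendsto (fun m => L (indicatorBM (hA m))) atTop (𝓝 0) := by
    simp_rw [hμ, sInt_indicatorBM μ (hA _)]
    simpa [hempty] using VectorMeasure.tendsto_vectorMeasure_iInter_atTop_nat hanti hA
  exact (ENNReal.toReal_pos hε.ne' hε_top).not_ge (ge_of_tendsto' hL_lim hL_ge)

end Capacity

theorem capacity_continuous_iff_dual_repr_general
    {Ω : Type*} [MeasurableSpace Ω] (Pr : Set (Measure Ω))
    (hprob : ∀ P ∈ Pr, IsProbabilityMeasure P) :
    (∀ A : ℕ → Set Ω, (∀ n, MeasurableSet (A n)) → Antitone A → (⋂ n, A n) = ∅ →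
        Tendsto (fun n => ⨆ P ∈ Pr, P (A n)) atTop (𝓝 0)) ↔
      (∀ l : boundedMeasurable Ω →ₗ[ℝ] ℝ,
        (∃ C : ℝ, ∀ f : boundedMeasurable Ω,
          |l f| ≤ C * ⨆ P : Pr, ∫ ω, |f.1 ω| ∂(P.1)) →
        ∃ μ : SignedMeasure Ω, ∀ f : boundedMeasurable Ω, l f = sInt μ f.1) :=
  ⟨exists_signedMeasure_repr_of_tendsto hprob,
    fun hrepr _ hA hanti hempty => tendsto_of_signedMeasure_repr hprob hrepr hA hanti hempty⟩

/-- Equivalence of: (i) the capacity `c` is continuous along decreasing sequences of sets with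
empty intersection, and (ii) every linear functional on `ℒ^∞` which is continuous for the norm
`f ↦ sup_{P ∈ Pr} E_P[|f|]` is represented by a finite signed measure. -/
theorem capacity_continuous_iff_dual_repr
    {Ω : Type*} [MeasurableSpace Ω] (Pr : Set (Measure Ω))
    (hne : Pr.Nonempty) (hprob : ∀ P ∈ Pr, IsProbabilityMeasure P) :
    (∀ A : ℕ → Set Ω, (∀ n, MeasurableSet (A n)) → Antitone A → (⋂ n, A n) = ∅ →
        Tendsto (fun n => ⨆ P ∈ Pr, P (A n)) atTop (𝓝 0)) ↔
      (∀ l : boundedMeasurable Ω →ₗ[ℝ] ℝ,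
        (∃ C : ℝ, ∀ f : boundedMeasurable Ω,
          |l f| ≤ C * ⨆ P : Pr, ∫ ω, |f.1 ω| ∂(P.1)) →
        ∃ μ : SignedMeasure Ω, ∀ f : boundedMeasurable Ω, l f = sInt μ f.1) :=
  capacity_continuous_iff_dual_repr_general Pr hprob
end

section
/- Suppose that for every linear functional l : H_c → ℝ, where H_c := {f : Ω → ℝ measurable with sup_{P∈𝒫} E_P[|f|] < ∞}, for which there exists a constant C with |l(f)| ≤ C · sup_{P∈𝒫} E_P[|f|] for all f ∈ H_c, the set function 𝔉 ∋ A ↦ l(1_A) is countably additive. Then for every decreasing sequence (A_n) ⊆ 𝔉 with ⋂_n A_n = ∅ one has sup_{P∈𝒫} P(A_n) → 0 as n → ∞. -/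
/-! Let `ε` be the limit of the decreasing capacities `sup_P P(A_n)`. The functional
`f ↦ limsup_n sup_P ∫_{A_n} f dP` is sublinear and dominated by the norm of `H_c`; a
Hahn–Banach extension of `t • 1_{A_0} ↦ t ε` below it is a bounded linear functional `l` with
`l(1_{A_n}) = ε` for every `n`. Countable additivity of `l` along the disjoint sets
`A_n \ A_{n+1}`, whose union is `A_0`, forces `l(1_{A_n}) → 0`, hence `ε = 0`. -/

open MeasureTheory Filter Topology Set
open scoped ENNReal

/-- `H_c`: the space of measurable functions `f` with `sup_{P ∈ Pr} E_P[|f|] < ∞`,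
as a submodule of `Ω → ℝ`. -/
def Hc (Ω : Type*) [MeasurableSpace Ω] (Pr : Set (Measure Ω)) : Submodule ℝ (Ω → ℝ) where
  carrier := {f | Measurable f ∧ (⨆ P : Pr, ∫⁻ ω, ENNReal.ofReal |f ω| ∂(P.1)) < ⊤}
  zero_mem' := by
    refine ⟨measurable_const, lt_of_le_of_lt (iSup_le fun P => le_of_eq ?_)
      (by simp : (0:ℝ≥0∞) < ⊤)⟩
    simp
  add_mem' := by
    rintro f g ⟨hf, hfi⟩ ⟨hg, hgi⟩
    refine ⟨hf.add hg, ?_⟩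
    have hb : ∀ P : Pr, ∫⁻ ω, ENNReal.ofReal |(f + g) ω| ∂(P.1) ≤
        (⨆ P : Pr, ∫⁻ ω, ENNReal.ofReal |f ω| ∂(P.1)) +
        (⨆ P : Pr, ∫⁻ ω, ENNReal.ofReal |g ω| ∂(P.1)) := by
      intro P
      calc ∫⁻ ω, ENNReal.ofReal |(f + g) ω| ∂(P.1)
          ≤ ∫⁻ ω, (ENNReal.ofReal |f ω| + ENNReal.ofReal |g ω|) ∂(P.1) := by
            refine lintegral_mono fun ω => ?_
            calc ENNReal.ofReal |(f + g) ω| ≤ ENNReal.ofReal (|f ω| + |g ω|) :=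
                  ENNReal.ofReal_le_ofReal (abs_add_le _ _)
              _ ≤ _ := ENNReal.ofReal_add_le
        _ = (∫⁻ ω, ENNReal.ofReal |f ω| ∂(P.1)) + ∫⁻ ω, ENNReal.ofReal |g ω| ∂(P.1) :=
            lintegral_add_left (ENNReal.measurable_ofReal.comp hf.abs) _
        _ ≤ _ := add_le_add
            (le_iSup (fun P : Pr => ∫⁻ ω, ENNReal.ofReal |f ω| ∂(P.1)) P)
            (le_iSup (fun P : Pr => ∫⁻ ω, ENNReal.ofReal |g ω| ∂(P.1)) P)
    exact lt_of_le_of_lt (iSup_le hb) (ENNReal.add_lt_top.mpr ⟨hfi, hgi⟩)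
  smul_mem' := by
    rintro c f ⟨hf, hfi⟩
    refine ⟨(hf.const_mul c : Measurable fun ω => c * f ω), ?_⟩
    have hb : ∀ P : Pr, ∫⁻ ω, ENNReal.ofReal |(c • f) ω| ∂(P.1) ≤
        ENNReal.ofReal |c| * ⨆ P : Pr, ∫⁻ ω, ENNReal.ofReal |f ω| ∂(P.1) := by
      intro P
      calc ∫⁻ ω, ENNReal.ofReal |(c • f) ω| ∂(P.1)
          = ∫⁻ ω, ENNReal.ofReal |c| * ENNReal.ofReal |f ω| ∂(P.1) := by
            refine lintegral_congr fun ω => ?_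
            rw [Pi.smul_apply, smul_eq_mul, abs_mul, ENNReal.ofReal_mul (abs_nonneg c)]
        _ = ENNReal.ofReal |c| * ∫⁻ ω, ENNReal.ofReal |f ω| ∂(P.1) :=
            lintegral_const_mul _ (ENNReal.measurable_ofReal.comp hf.abs)
        _ ≤ _ := mul_le_mul' le_rfl
            (le_iSup (fun P : Pr => ∫⁻ ω, ENNReal.ofReal |f ω| ∂(P.1)) P)
    exact lt_of_le_of_lt (iSup_le hb) (ENNReal.mul_lt_top ENNReal.ofReal_lt_top hfi)


structure IsSublinear {E : Type*} [AddCommGroup E] [Module ℝ E] (N : E → ℝ) : Prop where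
  map_smul_of_pos : ∀ c : ℝ, 0 < c → ∀ x, N (c • x) = c * N x
  map_add_le : ∀ x y, N (x + y) ≤ N x + N y

namespace IsSublinear

variable {E : Type*} [AddCommGroup E] [Module ℝ E] {N : E → ℝ}

lemma map_zero (hN : IsSublinear N) : N 0 = 0 := by
  have h := hN.map_smul_of_pos 2 two_pos 0
  rw [smul_zero] at h
  linarith

lemma neg_le_map_neg (hN : IsSublinear N) (x : E) : -N x ≤ N (-x) := by
  have h := hN.map_add_le x (-x)
  rw [add_neg_cancel, hN.map_zero] at h
  linarith

lemma mul_le_map_smul (hN : IsSublinear N) (t : ℝ) (x : E) : t * N x ≤ N (t • x) := by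
  rcases lt_trichotomy t 0 with ht | rfl | ht
  · have h := hN.map_smul_of_pos (-t) (neg_pos.2 ht) (-x)
    rw [smul_neg, neg_smul, neg_neg] at h
    nlinarith [hN.neg_le_map_neg x]
  · simp [hN.map_zero]
  · exact (hN.map_smul_of_pos t ht x).ge

theorem exists_linearMap_le_eq (hN : IsSublinear N) (x : E) :
    ∃ l : E →ₗ[ℝ] ℝ, (∀ y, l y ≤ N y) ∧ l x = N x := by
  have hx : ∀ c : ℝ, c • x = 0 → c • N x = 0 := by
    intro c hc
    rcases smul_eq_zero.1 hc with rfl | rfl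
    · exact zero_smul _ _
    · rw [hN.map_zero, smul_zero]
  obtain ⟨l, hl_ext, hl_le⟩ := exists_extension_of_le_sublinear
    (LinearPMap.mkSpanSingleton' x (N x) hx) N hN.map_smul_of_pos hN.map_add_le (by
      rintro ⟨z, hz⟩
      obtain ⟨t, rfl⟩ := Submodule.mem_span_singleton.1 hz
      rw [LinearPMap.mkSpanSingleton'_apply, smul_eq_mul]
      exact hN.mul_le_map_smul t x)
  exact ⟨l, hl_le, (hl_ext ⟨x, Submodule.mem_span_singleton_self x⟩).trans
    (LinearPMap.mkSpanSingleton'_apply_self _ _ _ _)⟩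

theorem iSup_linearMap {ι : Type*} [Nonempty ι] (φ : ι → E →ₗ[ℝ] ℝ) (M : E → ℝ)
    (hM : ∀ i x, φ i x ≤ M x) : IsSublinear fun x => ⨆ i, φ i x where
  map_smul_of_pos c hc x := by
    simp only [map_smul, smul_eq_mul]
    exact (Real.mul_iSup_of_nonneg hc.le _).symm
  map_add_le x y := by
    have hbdd : ∀ z, BddAbove (range fun i => φ i z) := fun z =>
      ⟨M z, forall_mem_range.2 fun i => hM i z⟩
    refine ciSup_le fun i => ?_
    rw [map_add]
    exact add_le_add (le_ciSup (hbdd x) i) (le_ciSup (hbdd y) i)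

theorem limsup {ι : Type*} {L : Filter ι} [L.NeBot] {g : ι → E → ℝ}
    (hg : ∀ i, IsSublinear (g i)) (M : E → ℝ) (hM : ∀ i x, |g i x| ≤ M x) :
    IsSublinear fun x => Filter.limsup (fun i => g i x) L := by
  have hbdd : ∀ x, IsBoundedUnder (· ≤ ·) L fun i => g i x := fun x =>
    isBoundedUnder_of ⟨M x, fun i => (abs_le.1 (hM i x)).2⟩
  have hbdd' : ∀ x, IsBoundedUnder (· ≥ ·) L fun i => g i x := fun x =>
    isBoundedUnder_of ⟨-M x, fun i => (abs_le.1 (hM i x)).1⟩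
  refine ⟨fun c hc x => ?_, fun x y => ?_⟩
  · have hcbdd : IsBoundedUnder (· ≤ ·) L fun i => c * g i x :=
      isBoundedUnder_of ⟨c * M x, fun i =>
        mul_le_mul_of_nonneg_left (abs_le.1 (hM i x)).2 hc.le⟩
    have hcbdd' : IsBoundedUnder (· ≥ ·) L fun i => c * g i x :=
      isBoundedUnder_of ⟨c * -M x, fun i =>
        mul_le_mul_of_nonneg_left (abs_le.1 (hM i x)).1 hc.le⟩
    simp only [(hg _).map_smul_of_pos c hc]
    exact ((OrderIso.mulLeft₀ c hc).limsup_apply (hbdd x) (hbdd' x).isCoboundedUnder_le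
      hcbdd hcbdd'.isCoboundedUnder_le).symm
  · calc Filter.limsup (fun i => g i (x + y)) L
        ≤ Filter.limsup ((fun i => g i x) + fun i => g i y) L :=
          limsup_le_limsup (Eventually.of_forall fun i => (hg i).map_add_le x y)
            (hbdd' (x + y)).isCoboundedUnder_le (isBoundedUnder_le_add (hbdd x) (hbdd y))
      _ ≤ _ := limsup_add_le (hbdd' x) (hbdd x) (hbdd' y).isCoboundedUnder_le (hbdd y)

end IsSublinear

lemma Antitone.pairwise_disjoint_sdiff_succ {α : Type*} {A : ℕ → Set α} (hA : Antitone A) :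
    Pairwise (Function.onFun Disjoint fun n => A n \ A (n + 1)) :=
  (pairwise_disjoint_on _).2 fun _ _ hmn =>
    disjoint_sdiff_left.mono_right (sdiff_subset.trans (hA hmn))

lemma Antitone.iUnion_sdiff_succ {α : Type*} {A : ℕ → Set α} (hA : Antitone A)
    (hempty : ⋂ n, A n = ∅) : ⋃ n, A n \ A (n + 1) = A 0 := by
  refine (iUnion_subset fun n => sdiff_subset.trans (hA n.zero_le)).antisymm fun ω hω => ?_
  by_contra hω'
  have hmem : ∀ n, ω ∈ A n := fun n => by
    induction n with
    | zero => exact hω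
    | succ n ih => by_contra h; exact hω' (mem_iUnion.2 ⟨n, ih, h⟩)
  simpa [hempty] using mem_iInter.2 hmem

lemma tendsto_zero_of_hasSum_sub_succ {G : Type*} [AddCommGroup G] [TopologicalSpace G]
    [IsTopologicalAddGroup G] {f : ℕ → G} (h : HasSum (fun n => f n - f (n + 1)) (f 0)) :
    Tendsto f atTop (𝓝 0) := by
  have h' := (tendsto_const_nhds (x := f 0)).sub h.tendsto_sum_nat
  simpa only [Finset.sum_range_sub', sub_sub_cancel, sub_self] using h'

section Hc

variable {Ω : Type*} [MeasurableSpace Ω] {Pr : Set (Measure Ω)}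

noncomputable def hcNorm (Pr : Set (Measure Ω)) (f : Ω → ℝ) : ℝ :=
  (⨆ P : Pr, ∫⁻ ω, ENNReal.ofReal |f ω| ∂P.1).toReal

lemma hcNorm_neg (f : Ω → ℝ) : hcNorm Pr (-f) = hcNorm Pr f := by
  simp only [hcNorm, Pi.neg_apply, abs_neg]

lemma integrable_of_mem_Hc {f : Ω → ℝ} (hf : f ∈ Hc Ω Pr) (P : Pr) : Integrable f P.1 := by
  refine ⟨hf.1.aestronglyMeasurable, ?_⟩
  rw [hasFiniteIntegral_iff_norm]
  simp only [Real.norm_eq_abs]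
  exact (le_iSup (fun P : Pr => ∫⁻ ω, ENNReal.ofReal |f ω| ∂P.1) P).trans_lt hf.2

lemma abs_setIntegral_le_hcNorm {f : Ω → ℝ} (hf : f ∈ Hc Ω Pr) (P : Pr) (S : Set Ω) :
    |∫ ω in S, f ω ∂P.1| ≤ hcNorm Pr f := by
  have hfP := integrable_of_mem_Hc hf P
  calc |∫ ω in S, f ω ∂P.1| ≤ ∫ ω in S, |f ω| ∂P.1 := abs_integral_le_integral_abs
    _ ≤ ∫ ω, |f ω| ∂P.1 :=
      setIntegral_le_integral hfP.abs (Eventually.of_forall fun ω => abs_nonneg _)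
    _ = (∫⁻ ω, ENNReal.ofReal |f ω| ∂P.1).toReal :=
      integral_eq_lintegral_of_nonneg_ae (Eventually.of_forall fun ω => abs_nonneg _)
        hf.1.abs.aestronglyMeasurable
    _ ≤ hcNorm Pr f := ENNReal.toReal_mono hf.2.ne
      (le_iSup (fun P : Pr => ∫⁻ ω, ENNReal.ofReal |f ω| ∂P.1) P)

lemma indicator_mem_Hc (hprob : ∀ P ∈ Pr, IsProbabilityMeasure P) {S : Set Ω}
    (hS : MeasurableSet S) : S.indicator (fun _ => (1 : ℝ)) ∈ Hc Ω Pr := by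
  refine ⟨measurable_const.indicator hS,
    lt_of_le_of_lt (iSup_le fun P => ?_) ENNReal.one_lt_top⟩
  have := hprob P.1 P.2
  calc ∫⁻ ω, ENNReal.ofReal |S.indicator (fun _ => (1 : ℝ)) ω| ∂P.1
      ≤ ∫⁻ _, 1 ∂P.1 := lintegral_mono fun ω => by by_cases h : ω ∈ S <;> simp [h]
    _ = 1 := by simp

noncomputable def indicatorHc (hprob : ∀ P ∈ Pr, IsProbabilityMeasure P) {S : Set Ω}
    (hS : MeasurableSet S) : Hc Ω Pr :=
  ⟨S.indicator fun _ => 1, indicator_mem_Hc hprob hS⟩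

noncomputable def setIntegralHc (S : Set Ω) (P : Pr) : Hc Ω Pr →ₗ[ℝ] ℝ where
  toFun f := ∫ ω in S, f.1 ω ∂P.1
  map_add' f g :=
    integral_add (integrable_of_mem_Hc f.2 P).restrict (integrable_of_mem_Hc g.2 P).restrict
  map_smul' c f := integral_smul c f.1

lemma setIntegralHc_indicatorHc (hprob : ∀ P ∈ Pr, IsProbabilityMeasure P) {S T : Set Ω}
    (hS : MeasurableSet S) (hT : MeasurableSet T) (hST : S ⊆ T) (P : Pr) :
    setIntegralHc S P (indicatorHc hprob hT) = P.1.real S := by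
  change ∫ ω in S, T.indicator (fun _ => (1 : ℝ)) ω ∂P.1 = _
  rw [setIntegral_congr_fun hS fun ω hω => indicator_of_mem (hST hω) _]
  simp

lemma indicatorHc_sdiff (hprob : ∀ P ∈ Pr, IsProbabilityMeasure P) {S T : Set Ω}
    (hS : MeasurableSet S) (hT : MeasurableSet T) (hST : S ⊆ T) :
    indicatorHc hprob (hT.diff hS) = indicatorHc hprob hT - indicatorHc hprob hS :=
  Subtype.ext (indicator_sdiff hST _)

lemma toReal_iSup_mem_measure (hprob : ∀ P ∈ Pr, IsProbabilityMeasure P) (S : Set Ω) :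
    (⨆ P ∈ Pr, P S).toReal = ⨆ P : Pr, P.1.real S := by
  rw [← iSup_subtype'', ENNReal.toReal_iSup fun P => by
    have := hprob P.1 P.2
    exact measure_ne_top _ _]
  rfl

def IsSigmaAdditiveOnIndicators (l : Hc Ω Pr →ₗ[ℝ] ℝ) : Prop :=
  ∀ A : ℕ → Set Ω, (∀ i, MeasurableSet (A i)) → Pairwise (Function.onFun Disjoint A) →
    ∀ (hm : ∀ i, (A i).indicator (fun _ => (1:ℝ)) ∈ Hc Ω Pr)
      (hU : (⋃ i, A i).indicator (fun _ => (1:ℝ)) ∈ Hc Ω Pr),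
      HasSum (fun i => l ⟨(A i).indicator (fun _ => (1:ℝ)), hm i⟩)
        (l ⟨(⋃ i, A i).indicator (fun _ => (1:ℝ)), hU⟩)

theorem IsSigmaAdditiveOnIndicators.tendsto_apply_indicatorHc
    (hprob : ∀ P ∈ Pr, IsProbabilityMeasure P) {l : Hc Ω Pr →ₗ[ℝ] ℝ}
    (hl : IsSigmaAdditiveOnIndicators l) {A : ℕ → Set Ω} (hA : ∀ n, MeasurableSet (A n))
    (hanti : Antitone A) (hempty : ⋂ n, A n = ∅) :
    Tendsto (fun n => l (indicatorHc hprob (hA n))) atTop (𝓝 0) := by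
  have hsum : HasSum (fun n => l (indicatorHc hprob ((hA n).diff (hA (n + 1)))))
      (l (indicatorHc hprob (hA 0))) := by
    have h := hl _ (fun n => (hA n).diff (hA (n + 1))) hanti.pairwise_disjoint_sdiff_succ
      (fun n => indicator_mem_Hc hprob ((hA n).diff (hA (n + 1))))
      (by rw [hanti.iUnion_sdiff_succ hempty]; exact indicator_mem_Hc hprob (hA 0))
    simp only [hanti.iUnion_sdiff_succ hempty] at h
    exact h
  refine tendsto_zero_of_hasSum_sub_succ ?_
  simpa only [← map_sub, ← indicatorHc_sdiff hprob (hA _) (hA _) (hanti (Nat.le_succ _))]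
    using hsum

noncomputable def upperSetIntegral (S : Set Ω) (f : Hc Ω Pr) : ℝ :=
  ⨆ P : Pr, setIntegralHc S P f

lemma upperSetIntegral_indicatorHc (hprob : ∀ P ∈ Pr, IsProbabilityMeasure P) {S T : Set Ω}
    (hS : MeasurableSet S) (hT : MeasurableSet T) (hST : S ⊆ T) :
    upperSetIntegral S (indicatorHc hprob hT) = ⨆ P : Pr, P.1.real S :=
  iSup_congr fun P => setIntegralHc_indicatorHc hprob hS hT hST P

noncomputable def limsupUpperSetIntegral (A : ℕ → Set Ω) (f : Hc Ω Pr) : ℝ :=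
  limsup (fun n => upperSetIntegral (A n) f) atTop

section Nonempty

variable [Nonempty Pr]

lemma abs_upperSetIntegral_le (S : Set Ω) (f : Hc Ω Pr) :
    |upperSetIntegral S f| ≤ hcNorm Pr f.1 := by
  have hbound := fun P => abs_le.1 (abs_setIntegral_le_hcNorm f.2 P S)
  have hbdd : BddAbove (range fun P => setIntegralHc S P f) :=
    ⟨_, forall_mem_range.2 fun P => (hbound P).2⟩
  obtain ⟨P⟩ := ‹Nonempty Pr›
  exact abs_le.2 ⟨(hbound P).1.trans (le_ciSup hbdd P), ciSup_le fun P => (hbound P).2⟩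

lemma isSublinear_limsupUpperSetIntegral (A : ℕ → Set Ω) :
    IsSublinear (limsupUpperSetIntegral (Pr := Pr) A) :=
  IsSublinear.limsup
    (fun n => IsSublinear.iSup_linearMap _ (fun f => hcNorm Pr f.1)
      fun P f => (abs_le.1 (abs_setIntegral_le_hcNorm f.2 P (A n))).2)
    _ fun n f => abs_upperSetIntegral_le (A n) f

lemma limsupUpperSetIntegral_le_hcNorm (A : ℕ → Set Ω) (f : Hc Ω Pr) :
    limsupUpperSetIntegral A f ≤ hcNorm Pr f.1 :=
  limsup_le_of_le (isBoundedUnder_of ⟨-hcNorm Pr f.1, fun n =>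
      (abs_le.1 (abs_upperSetIntegral_le (A n) f)).1⟩).isCoboundedUnder_le
    (Eventually.of_forall fun n => (abs_le.1 (abs_upperSetIntegral_le (A n) f)).2)

theorem exists_linearMap_abs_le_hcNorm_apply_indicatorHc_eq
    (hprob : ∀ P ∈ Pr, IsProbabilityMeasure P) {A : ℕ → Set Ω}
    (hA : ∀ n, MeasurableSet (A n)) (hanti : Antitone A) {ε : ℝ}
    (hε : Tendsto (fun n => ⨆ P : Pr, P.1.real (A n)) atTop (𝓝 ε)) :
    ∃ l : Hc Ω Pr →ₗ[ℝ] ℝ, (∀ f, |l f| ≤ hcNorm Pr f.1) ∧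
      ∀ n, l (indicatorHc hprob (hA n)) = ε := by
  have hp_ind : ∀ m, limsupUpperSetIntegral A (indicatorHc hprob (hA m)) = ε := fun m => by
    refine (limsup_congr ?_).trans hε.limsup_eq
    filter_upwards [eventually_ge_atTop m] with n hn
    exact upperSetIntegral_indicatorHc hprob (hA n) (hA m) (hanti hn)
  have hp_sub : ∀ m,
      limsupUpperSetIntegral A (indicatorHc hprob (hA 0) - indicatorHc hprob (hA m)) = 0 := by
    intro m
    refine (limsup_congr ?_).trans (limsup_const 0)
    filter_upwards [eventually_ge_atTop m] with n hn
    simp only [upperSetIntegral, map_sub, sub_self, ciSup_const,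
      setIntegralHc_indicatorHc hprob (hA n) _ (hanti n.zero_le),
      setIntegralHc_indicatorHc hprob (hA n) _ (hanti hn)]
  obtain ⟨l, hl_le, hl_eq⟩ :=
    (isSublinear_limsupUpperSetIntegral A).exists_linearMap_le_eq (indicatorHc hprob (hA 0))
  refine ⟨l, fun f => abs_le.2 ⟨?_, ?_⟩, fun m => le_antisymm ?_ ?_⟩
  · have h := (hl_le (-f)).trans (limsupUpperSetIntegral_le_hcNorm A (-f))
    rw [map_neg, Submodule.coe_neg, hcNorm_neg] at h
    linarith
  · exact (hl_le f).trans (limsupUpperSetIntegral_le_hcNorm A f)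
  · exact (hl_le _).trans_eq (hp_ind m)
  · have h := hl_le (indicatorHc hprob (hA 0) - indicatorHc hprob (hA m))
    rw [map_sub, hp_sub, hl_eq, hp_ind] at h
    linarith

end Nonempty

end Hc

/-- If every norm-continuous linear functional on `H_c` induces a countably additive set
function `A ↦ l(1_A)`, then the capacity `c` is continuous along decreasing sequences of
sets with empty intersection. -/
theorem capacity_continuous_of_Hc_dual_countablyAdditive
    {Ω : Type*} [MeasurableSpace Ω] (Pr : Set (Measure Ω))
    (hne : Pr.Nonempty) (hprob : ∀ P ∈ Pr, IsProbabilityMeasure P)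
    (hl : ∀ l : Hc Ω Pr →ₗ[ℝ] ℝ,
      (∃ C : ℝ, ∀ f : Hc Ω Pr,
        |l f| ≤ C * (⨆ P : Pr, ∫⁻ ω, ENNReal.ofReal |f.1 ω| ∂(P.1)).toReal) →
      ∀ A : ℕ → Set Ω, (∀ i, MeasurableSet (A i)) → Pairwise (Function.onFun Disjoint A) →
        ∀ (hm : ∀ i, (A i).indicator (fun _ => (1:ℝ)) ∈ Hc Ω Pr)
          (hU : (⋃ i, A i).indicator (fun _ => (1:ℝ)) ∈ Hc Ω Pr),
          HasSum (fun i => l ⟨(A i).indicator (fun _ => (1:ℝ)), hm i⟩)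
            (l ⟨(⋃ i, A i).indicator (fun _ => (1:ℝ)), hU⟩)) :
    ∀ A : ℕ → Set Ω, (∀ n, MeasurableSet (A n)) → Antitone A → (⋂ n, A n) = ∅ →
      Tendsto (fun n => ⨆ P ∈ Pr, P (A n)) atTop (𝓝 0) := by
  intro A hA hanti hempty
  have := hne.to_subtype
  set c : ℕ → ℝ≥0∞ := fun n => ⨆ P ∈ Pr, P (A n)
  have hc : Tendsto c atTop (𝓝 (⨅ n, c n)) :=
    tendsto_atTop_iInf fun m n hmn => iSup₂_mono fun P _ => measure_mono (hanti hmn)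
  have hinf_ne_top : ⨅ n, c n ≠ ⊤ := ne_top_of_le_ne_top ENNReal.one_ne_top <|
    (iInf_le c 0).trans <| iSup₂_le fun P hP => by have := hprob P hP; exact prob_le_one
  obtain ⟨l, hl_bound, hl_ind⟩ := exists_linearMap_abs_le_hcNorm_apply_indicatorHc_eq hprob hA
    hanti (by simpa only [Function.comp_def, c, toReal_iSup_mem_measure hprob] using
      (ENNReal.tendsto_toReal hinf_ne_top).comp hc)
  have hσ : IsSigmaAdditiveOnIndicators l :=
    hl l ⟨1, fun f => (one_mul (hcNorm Pr f.1)).symm ▸ hl_bound f⟩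
  have hl0 := hσ.tendsto_apply_indicatorHc hprob hA hanti hempty
  simp only [hl_ind] at hl0
  have hinf : ⨅ n, c n = 0 := ((ENNReal.toReal_eq_zero_iff _).1
    (tendsto_nhds_unique tendsto_const_nhds hl0)).resolve_right hinf_ne_top
  rwa [hinf] at hc
end

section
/- Assume that for every decreasing sequence (A_n) ⊆ 𝔉 with ⋂_n A_n = ∅ one has sup_{P∈𝒫} P(A_n) → 0. Then there exists a countable subset 𝒫̃ ⊆ 𝒫 that is equivalent to 𝒫, i.e., for every A ∈ 𝔉: sup_{P∈𝒫̃} P(A) = 0 if and only if sup_{P∈𝒫} P(A) = 0; moreover there exists a single probability measure Q on (Ω, 𝔉) such that for every A ∈ 𝔉: Q(A) = 0 if and only if sup_{P∈𝒫} P(A) = 0. -/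
/-!
If no countable subclass were equivalent to `Pr`, then for some `δ > 0` one could greedily pick
`Pₙ ∈ Pr` and measurable `Aₙ` that are null for `P₀, …, Pₙ₋₁` but have `Pₙ Aₙ > δ`. With
`Cₙ = ⋃ k ≥ n, A k`, the sets `Cₙ \ ⋂ m, Cₘ` decrease to `∅` and, since `⋂ m, Cₘ ⊆ Cₙ₊₁` is
`Pₙ`-null, have `Pₙ`-mass at least `Pₙ Aₙ > δ`, contradicting continuity of `⨆ P ∈ Pr, P` at `∅`.
A countable equivalent subclass enumerated as `(Pₙ)` yields `Q = ∑ 2^{-(n+1)} Pₙ`.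
-/

open MeasureTheory Filter Topology Set
open scoped ENNReal

namespace MeasureTheory

variable {Ω : Type*} [MeasurableSpace Ω]

def SupContinuousAtEmpty (Pr : Set (Measure Ω)) : Prop :=
  ∀ A : ℕ → Set Ω, (∀ n, MeasurableSet (A n)) → Antitone A → (⋂ n, A n) = ∅ →
    Tendsto (fun n => ⨆ P ∈ Pr, P (A n)) atTop (𝓝 0)

theorem SupContinuousAtEmpty.tendsto_measure_of_null_of_lt {Pr : Set (Measure Ω)}
    (hPr : SupContinuousAtEmpty Pr) {P : ℕ → Measure Ω} {A : ℕ → Set Ω} (hP : ∀ n, P n ∈ Pr)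
    (hA : ∀ n, MeasurableSet (A n)) (hnull : ∀ m n, m < n → P m (A n) = 0) :
    Tendsto (fun n => P n (A n)) atTop (𝓝 0) := by
  set C : ℕ → Set Ω := fun n => ⋃ k ≥ n, A k
  set D : ℕ → Set Ω := fun n => C n \ ⋂ m, C m
  have hC (n : ℕ) : MeasurableSet (C n) := .biUnion (to_countable _) fun k _ => hA k
  have hD : Tendsto (fun n => ⨆ P ∈ Pr, P (D n)) atTop (𝓝 0) := by
    refine hPr D (fun n => ?_) (fun m n hmn => ?_) ?_
    · exact (hC n).diff (.iInter hC)
    · exact sdiff_subset_sdiff_left (biUnion_mono (fun k hk => hmn.trans hk) fun _ _ => le_rfl)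
    · simp only [D, sdiff_eq, ← iInter_inter, inter_compl_self]
  refine tendsto_of_tendsto_of_tendsto_of_le_of_le tendsto_const_nhds hD (fun _ => zero_le)
    fun n => ?_
  have hlimsup : P n (⋂ m, C m) = 0 :=
    measure_mono_null (iInter_subset C (n + 1)) <|
      measure_biUnion_null_iff (to_countable _) |>.2 (hnull n)
  calc P n (A n) ≤ P n (C n) := measure_mono (subset_biUnion_of_mem (le_refl n))
    _ = P n (D n) := (measure_sdiff_null hlimsup).symm
    _ ≤ ⨆ P ∈ Pr, P (D n) := le_iSup₂ (f := fun P (_ : P ∈ Pr) => P (D n)) (P n) (hP n)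

theorem SupContinuousAtEmpty.exists_countable_forall_null_le {Pr : Set (Measure Ω)}
    (hPr : SupContinuousAtEmpty Pr) {δ : ℝ≥0∞} (hδ : δ ≠ 0) :
    ∃ S ⊆ Pr, S.Countable ∧
      ∀ A, MeasurableSet A → (∀ P ∈ S, P A = 0) → ∀ P ∈ Pr, P A ≤ δ := by
  by_contra! h
  obtain ⟨f, hf, hnull⟩ := exists_seq_of_forall_finset_exists
    (fun x : Measure Ω × Set Ω => x.1 ∈ Pr ∧ MeasurableSet x.2 ∧ δ < x.1 x.2)
    (fun x y => x.1 y.2 = 0) fun s hs => by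
      obtain ⟨A, hA, hAnull, P, hP, hlt⟩ := h (Prod.fst '' s)
        (image_subset_iff.2 fun x hx => (hs x hx).1) (s.finite_toSet.image _).countable
      exact ⟨(P, A), ⟨hP, hA, hlt⟩, fun x hx => hAnull x.1 (mem_image_of_mem _ hx)⟩
  obtain ⟨n, hn⟩ := ((hPr.tendsto_measure_of_null_of_lt (fun n => (hf n).1)
    (fun n => (hf n).2.1) hnull).eventually (gt_mem_nhds (pos_iff_ne_zero.2 hδ))).exists
  exact (hf n).2.2.not_gt hn

theorem SupContinuousAtEmpty.exists_countable_null_iff {Pr : Set (Measure Ω)}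
    (hPr : SupContinuousAtEmpty Pr) :
    ∃ S ⊆ Pr, S.Countable ∧
      ∀ A, MeasurableSet A → ((∀ P ∈ S, P A = 0) ↔ ∀ P ∈ Pr, P A = 0) := by
  choose S hSPr hS hle using fun k : ℕ =>
    hPr.exists_countable_forall_null_le (δ := (k : ℝ≥0∞)⁻¹) (by simp)
  refine ⟨⋃ k, S k, iUnion_subset hSPr, countable_iUnion hS, fun A hA => ⟨fun h P hP => ?_,
    fun h P hP => h P (iUnion_subset hSPr hP)⟩⟩
  exact nonpos_iff_eq_zero.1 <| ge_of_tendsto' ENNReal.tendsto_inv_nat_nhds_zero fun k =>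
    hle k A hA (fun Q hQ => h Q (mem_iUnion_of_mem k hQ)) P hP

theorem exists_isProbabilityMeasure_null_iff (P : ℕ → Measure Ω)
    [∀ n, IsProbabilityMeasure (P n)] :
    ∃ Q : Measure Ω, IsProbabilityMeasure Q ∧ ∀ A, Q A = 0 ↔ ∀ n, P n A = 0 := by
  refine ⟨Measure.sum fun n => (2⁻¹ : ℝ≥0∞) ^ (n + 1) • P n, ⟨?_⟩, fun A => ?_⟩
  · simp [ENNReal.tsum_geometric_add_one, ENNReal.inv_mul_cancel]
  · simp

end MeasureTheory

/-- If the capacity `c = sup_{P ∈ Pr} P` is continuous along decreasing sequences of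
measurable sets with empty intersection, then there is a countable subclass `Pr' ⊆ Pr`
equivalent to `Pr`, and moreover a single probability measure `Q` whose null sets are
exactly the `Pr`-polar sets. -/
theorem countable_equivalent_subclass_of_capacity_continuous
    {Ω : Type*} [MeasurableSpace Ω] (Pr : Set (Measure Ω))
    (hne : Pr.Nonempty) (hprob : ∀ P ∈ Pr, IsProbabilityMeasure P)
    (hZ : ∀ A : ℕ → Set Ω, (∀ n, MeasurableSet (A n)) → Antitone A → (⋂ n, A n) = ∅ →
      Tendsto (fun n => ⨆ P ∈ Pr, P (A n)) atTop (𝓝 0)) :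
    (∃ Pr' : Set (Measure Ω), Pr' ⊆ Pr ∧ Pr'.Countable ∧
      ∀ A : Set Ω, MeasurableSet A → ((∀ P ∈ Pr', P A = 0) ↔ ∀ P ∈ Pr, P A = 0)) ∧
    (∃ Q : Measure Ω, IsProbabilityMeasure Q ∧
      ∀ A : Set Ω, MeasurableSet A → (Q A = 0 ↔ ∀ P ∈ Pr, P A = 0)) := by
  obtain ⟨S, hSPr, hS, hSnull⟩ := SupContinuousAtEmpty.exists_countable_null_iff hZ
  obtain ⟨P₀, hP₀⟩ := hne
  obtain ⟨P, hP⟩ := (hS.insert P₀).exists_eq_range (insert_nonempty P₀ S)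
  have hPPr (n : ℕ) : P n ∈ Pr := insert_subset hP₀ hSPr (hP ▸ mem_range_self n)
  have (n : ℕ) : IsProbabilityMeasure (P n) := hprob _ (hPPr n)
  obtain ⟨Q, hQ, hQnull⟩ := exists_isProbabilityMeasure_null_iff P
  refine ⟨⟨S, hSPr, hS, hSnull⟩, Q, hQ, fun A hA => ?_⟩
  rw [hQnull, ← forall_mem_range (p := fun P : Measure Ω => P A = 0), ← hP, forall_mem_insert,
    hSnull A hA]
  exact and_iff_right_of_imp fun h => h P₀ hP₀
end

section
/- Assume that for every decreasing sequence (A_n) ⊆ 𝔉 with ⋂_n A_n = ∅ one has sup_{P∈𝒫} P(A_n) → 0. Then for each ε > 0 there exist finitely many P_1, …, P_n ∈ 𝒫 and δ > 0 such that for every A ∈ 𝔉: if P_i(A) < δ for all i = 1, …, n, then P(A) < ε for all P ∈ 𝒫. -/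
/-!
Suppose no finite family works for some `ε > 0`. Then one can choose inductively `Q n ∈ Pr` and
measurable sets `A n` with `Q m (A n) < 2⁻ⁿ` for `m < n` but `ε ≤ Q n (A n)`. The tails
`⋃ k ≥ n, A k` decrease to `limsup A`, so their differences with `limsup A` decrease to `∅` and
have capacity tending to `0`, while `Q n (limsup A) ≤ ∑ k > n, 2⁻ᵏ`. Hence `Q n (A n) → 0`,
a contradiction.
-/

open MeasureTheory Filter Topology Set
open scoped ENNReal

theorem limsup_atTop_set_eq_iInter_iUnion_add {α : Type*} (A : ℕ → Set α) :
    limsup A atTop = ⋂ n, ⋃ i, A (i + n) := by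
  simp only [limsup_eq_iInf_iSup_of_nat', iInf_eq_iInter, iSup_eq_iUnion]

theorem exists_seq_of_forall_finset {α β : Type*} {R : ℕ → α → β → Prop} {T : α → β → Prop}
    (h : ∀ n (s : Finset α), ∃ x y, (∀ a ∈ s, R n a y) ∧ T x y) :
    ∃ (x : ℕ → α) (y : ℕ → β), (∀ m n, m < n → R n (x m) (y n)) ∧ ∀ n, T (x n) (y n) := by
  classical
  choose f g hR hT using h
  let hist : ℕ → Finset α := fun n => Nat.rec ∅ (fun k s => insert (f k s) s) n
  have hmem : ∀ m n, m < n → f m (hist m) ∈ hist n := by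
    intro m n hmn
    induction n with
    | zero => omega
    | succ n ih =>
      rcases Nat.lt_succ_iff_lt_or_eq.1 hmn with h | rfl
      · exact Finset.mem_insert_of_mem (ih h)
      · exact Finset.mem_insert_self _ _
  exact ⟨fun n => f n (hist n), fun n => g n (hist n),
    fun m n hmn => hR n _ _ (hmem m n hmn), fun n => hT n _⟩

section

variable {Ω : Type*} [MeasurableSpace Ω]

theorem measure_limsup_atTop_le_tsum (μ : Measure Ω) (A : ℕ → Set Ω) (n : ℕ) :
    μ (limsup A atTop) ≤ ∑' i, μ (A (i + n)) := by
  rw [limsup_atTop_set_eq_iInter_iUnion_add]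
  exact (measure_mono (iInter_subset _ n)).trans (measure_iUnion_le _)

def CapacityContinuousAtEmpty (Pr : Set (Measure Ω)) : Prop :=
  ∀ A : ℕ → Set Ω, (∀ n, MeasurableSet (A n)) → Antitone A → (⋂ n, A n) = ∅ →
    Tendsto (fun n => ⨆ P ∈ Pr, P (A n)) atTop (𝓝 0)

namespace CapacityContinuousAtEmpty

variable {Pr : Set (Measure Ω)} (hZ : CapacityContinuousAtEmpty Pr)
include hZ

theorem tendsto_iSup_measure_tail_diff_limsup {A : ℕ → Set Ω} (hA : ∀ n, MeasurableSet (A n)) :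
    Tendsto (fun n => ⨆ P ∈ Pr, P ((⋃ i, A (i + n)) \ limsup A atTop)) atTop (𝓝 0) := by
  refine hZ _ (fun n => (MeasurableSet.iUnion fun i => hA _).diff (.measurableSet_limsup hA))
    (fun m n hmn => sdiff_subset_sdiff_left (iUnion_subset fun i => ?_)) ?_
  · obtain ⟨k, rfl⟩ := Nat.exists_eq_add_of_le hmn
    exact subset_iUnion_of_subset (i + k) (by rw [add_right_comm, add_assoc])
  · rw [limsup_atTop_set_eq_iInter_iUnion_add, eq_empty_iff_forall_notMem]
    intro x hx
    simp only [mem_iInter, Set.mem_sdiff] at hx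
    exact (hx 0).2 fun n => (hx n).1

theorem tendsto_measure_apply_self {Q : ℕ → Measure Ω} {A : ℕ → Set Ω} {r : ℕ → ℝ≥0∞}
    (hQ : ∀ n, Q n ∈ Pr) (hA : ∀ n, MeasurableSet (A n))
    (hr : ∑' n, r n ≠ ∞) (hsmall : ∀ m n, m < n → Q m (A n) ≤ r n) :
    Tendsto (fun n => Q n (A n)) atTop (𝓝 0) := by
  have hbound : ∀ n, Q n (A n) ≤
      (⨆ P ∈ Pr, P ((⋃ i, A (i + n)) \ limsup A atTop)) + ∑' i, r (i + (n + 1)) := by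
    intro n
    calc Q n (A n) ≤ Q n ((⋃ i, A (i + n)) \ limsup A atTop ∪ limsup A atTop) := by
          rw [sdiff_union_self]
          exact measure_mono (subset_union_of_subset_left (subset_iUnion_of_subset 0 (by simp)) _)
    _ ≤ Q n ((⋃ i, A (i + n)) \ limsup A atTop) + Q n (limsup A atTop) := measure_union_le _ _
    _ ≤ _ := add_le_add (le_biSup (fun P : Measure Ω => P _) (hQ n))
          ((measure_limsup_atTop_le_tsum _ _ (n + 1)).trans
            (ENNReal.tsum_le_tsum fun i => hsmall n _ (by omega)))
  have hlim := (hZ.tendsto_iSup_measure_tail_diff_limsup hA).add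
    ((ENNReal.tendsto_sum_nat_add r hr).comp (tendsto_add_atTop_nat 1))
  rw [add_zero] at hlim
  exact tendsto_of_tendsto_of_tendsto_of_le_of_le tendsto_const_nhds hlim (fun _ => zero_le)
    hbound

theorem exists_finset_control {ε : ℝ≥0∞} (hε : 0 < ε) :
    ∃ F : Finset Pr, ∃ δ > 0, ∀ A, MeasurableSet A → (∀ P ∈ F, (P : Measure Ω) A < δ) →
      ∀ P ∈ Pr, P A < ε := by
  by_contra! h
  obtain ⟨Q, A, hsmall, hQA⟩ :=
    exists_seq_of_forall_finset (R := fun n (P : Pr) A => (P : Measure Ω) A < 2⁻¹ ^ n)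
      (T := fun (Q : Pr) A => MeasurableSet A ∧ ε ≤ (Q : Measure Ω) A) fun n F => by
        obtain ⟨A, hA, hsmall, Q, hQ, hQA⟩ := h F (2⁻¹ ^ n) (ENNReal.pow_pos (by simp) n)
        exact ⟨⟨Q, hQ⟩, A, hsmall, hA, hQA⟩
  have hlim := hZ.tendsto_measure_apply_self (fun n => (Q n).2) (fun n => (hQA n).1)
    (by rw [ENNReal.tsum_geometric]; norm_num) fun m n hmn => (hsmall m n hmn).le
  exact hε.not_ge (ge_of_tendsto' hlim fun n => (hQA n).2)

end CapacityContinuousAtEmpty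

end

theorem finitely_many_measures_control_capacity_general
    {Ω : Type*} [MeasurableSpace Ω] (Pr : Set (Measure Ω))
    (hZ : ∀ A : ℕ → Set Ω, (∀ n, MeasurableSet (A n)) → Antitone A → (⋂ n, A n) = ∅ →
      Tendsto (fun n => ⨆ P ∈ Pr, P (A n)) atTop (𝓝 0)) :
    ∀ ε : ℝ≥0∞, 0 < ε →
      ∃ (n : ℕ) (Ps : Fin n → Measure Ω) (δ : ℝ≥0∞),
        (∀ i, Ps i ∈ Pr) ∧ 0 < δ ∧
        ∀ A : Set Ω, MeasurableSet A → (∀ i, Ps i A < δ) → ∀ P ∈ Pr, P A < ε := by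
  intro ε hε
  obtain ⟨F, δ, hδ, hF⟩ := CapacityContinuousAtEmpty.exists_finset_control hZ hε
  refine ⟨F.card, fun i => F.equivFin.symm i, δ, fun i => (F.equivFin.symm i).1.2, hδ,
    fun A hA hsmall => hF A hA fun P hP => ?_⟩
  simpa using hsmall (F.equivFin ⟨P, hP⟩)

/-- If the capacity `c = sup_{P ∈ Pr} P` is continuous along decreasing sequences of
measurable sets with empty intersection, then for every `ε > 0` there are finitely many
`P_1, …, P_n ∈ Pr` and `δ > 0` such that any measurable set `A` with `P_i(A) < δ` for all
`i` satisfies `P(A) < ε` for all `P ∈ Pr`. -/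
theorem finitely_many_measures_control_capacity
    {Ω : Type*} [MeasurableSpace Ω] (Pr : Set (Measure Ω))
    (hne : Pr.Nonempty) (hprob : ∀ P ∈ Pr, IsProbabilityMeasure P)
    (hZ : ∀ A : ℕ → Set Ω, (∀ n, MeasurableSet (A n)) → Antitone A → (⋂ n, A n) = ∅ →
      Tendsto (fun n => ⨆ P ∈ Pr, P (A n)) atTop (𝓝 0)) :
    ∀ ε : ℝ≥0∞, 0 < ε →
      ∃ (n : ℕ) (Ps : Fin n → Measure Ω) (δ : ℝ≥0∞),
        (∀ i, Ps i ∈ Pr) ∧ 0 < δ ∧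
        ∀ A : Set Ω, MeasurableSet A → (∀ i, Ps i A < δ) → ∀ P ∈ Pr, P A < ε :=
  finitely_many_measures_control_capacity_general Pr hZ
end

section
/- Let B be a normed vector lattice over ℝ (a normed space with a lattice order compatible with the vector space structure such that |x| ≤ |y| implies ‖x‖ ≤ ‖y‖). Let (x_n) ⊆ B satisfy 0 ≤ x_{n+1} ≤ x_n for all n, and suppose that l(x_n) → 0 for every continuous linear functional l on B. Then ‖x_n‖ → 0. -/
/-!
By Hahn–Banach, weak convergence to `0` puts `0` in the norm closure of the convex hull of the
sequence. Every convex combination of the decreasing `x n` dominates some `x M`, so by solidity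
`‖x M‖` is small, and so is every later `‖x n‖`.

The order is only assumed compatible with addition, so `0 ≤ a • v` for `a ≥ 0 ≤ v` has to be
derived: it holds for dyadic `a` by repeated halving, and passes to all `a` because the positive
cone is closed.
-/

open Filter Topology Set

section LatticeOrderedGroup

variable {α : Type*} [Lattice α] [AddCommGroup α] [IsOrderedAddMonoid α]

theorem nonneg_of_two_pow_nsmul_nonneg {a : α} : ∀ {m : ℕ}, 0 ≤ 2 ^ m • a → 0 ≤ a
  | 0, h => by simpa using h
  | m + 1, h => nonneg_of_two_pow_nsmul_nonneg <| nsmul_two_semiclosed <| by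
      rwa [← mul_nsmul, ← pow_succ]

end LatticeOrderedGroup

section ClosedCone

variable {E : Type*} [AddCommGroup E] [Lattice E] [IsOrderedAddMonoid E] [Module ℝ E]
  [TopologicalSpace E] [ContinuousSMul ℝ E] [OrderClosedTopology E]

theorem smul_nonneg_of_orderClosedTopology {a : ℝ} (ha : 0 ≤ a) {v : E} (hv : 0 ≤ v) :
    0 ≤ a • v := by
  have hdyadic : ∀ (k m : ℕ), 0 ≤ ((k : ℝ) / 2 ^ m) • v := fun k m => by
    refine nonneg_of_two_pow_nsmul_nonneg (m := m) ?_
    rw [← Nat.cast_smul_eq_nsmul ℝ, smul_smul]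
    push_cast
    rw [mul_div_cancel₀ _ (by positivity), Nat.cast_smul_eq_nsmul]
    exact nsmul_nonneg hv k
  have happrox : Tendsto (fun m : ℕ => ((⌊a * 2 ^ m⌋₊ : ℝ) / 2 ^ m)) atTop (𝓝 a) :=
    (tendsto_nat_floor_mul_div_atTop ha).comp
      (tendsto_pow_atTop_atTop_of_one_lt one_lt_two)
  exact isClosed_le continuous_const continuous_id |>.mem_of_tendsto
    (happrox.smul_const v) (Eventually.of_forall fun m => hdyadic _ m)

theorem posSMulMono_of_orderClosedTopology : PosSMulMono ℝ E :=
  PosSMulMono.of_smul_nonneg fun _ ha _ hv => smul_nonneg_of_orderClosedTopology ha hv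

end ClosedCone

theorem norm_le_norm_of_nonneg_of_le {E : Type*} [NormedAddCommGroup E] [Lattice E]
    [HasSolidNorm E] [IsOrderedAddMonoid E] {y z : E} (hy : 0 ≤ y) (hyz : y ≤ z) : ‖y‖ ≤ ‖z‖ :=
  norm_le_norm_of_abs_le_abs <| by rwa [abs_of_nonneg hy, abs_of_nonneg (hy.trans hyz)]

theorem exists_le_of_mem_convexHull_range {ι E : Type*} [Preorder ι] [IsDirected ι (· ≤ ·)]
    [AddCommGroup E] [PartialOrder E] [IsOrderedAddMonoid E] [Module ℝ E] [PosSMulMono ℝ E]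
    {x : ι → E} (hx : Antitone x) {y : E} (hy : y ∈ convexHull ℝ (range x)) :
    ∃ i, x i ≤ y := by
  have hconvex : Convex ℝ (⋃ i, Ici (x i)) :=
    (Monotone.directed_le fun _ _ hij => Ici_subset_Ici.mpr (hx hij)).convex_iUnion
      fun _ => convex_Ici _
  have hsub : range x ⊆ ⋃ i, Ici (x i) := by
    rintro _ ⟨i, rfl⟩
    exact mem_iUnion.mpr ⟨i, le_rfl⟩
  simpa using convexHull_min hsub hconvex hy

theorem mem_closure_convexHull_range_of_forall_tendsto {ι E : Type*} {F : Filter ι} [F.NeBot]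
    [TopologicalSpace E] [AddCommGroup E] [IsTopologicalAddGroup E] [Module ℝ E]
    [ContinuousSMul ℝ E] [LocallyConvexSpace ℝ E] {x : ι → E} {a : E}
    (h : ∀ l : StrongDual ℝ E, Tendsto (fun i => l (x i)) F (𝓝 (l a))) :
    a ∈ closure (convexHull ℝ (range x)) := by
  by_contra ha
  obtain ⟨l, u, hlau, hlu⟩ := geometric_hahn_banach_point_closed
    (convex_convexHull ℝ _).closure isClosed_closure ha
  obtain ⟨i, hi⟩ := ((h l).eventually (eventually_lt_nhds hlau)).exists
  exact (hlu _ (subset_closure (subset_convexHull ℝ _ (mem_range_self i)))).not_gt hi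

/-- In a normed vector lattice `B` over `ℝ`, if `(x_n)` is a nonincreasing sequence of
nonnegative elements converging weakly to `0` (i.e. `l(x_n) → 0` for every continuous
linear functional `l`), then `‖x_n‖ → 0`. -/
theorem norm_tendsto_zero_of_weak_tendsto_zero
    {B : Type*} [NormedAddCommGroup B] [Lattice B] [HasSolidNorm B] [IsOrderedAddMonoid B] [NormedSpace ℝ B]
    (x : ℕ → B) (hpos : ∀ n, 0 ≤ x n) (hdec : ∀ n, x (n + 1) ≤ x n)
    (hweak : ∀ l : B →L[ℝ] ℝ, Tendsto (fun n => l (x n)) atTop (𝓝 0)) :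
    Tendsto (fun n => ‖x n‖) atTop (𝓝 0) := by
  have : PosSMulMono ℝ B := posSMulMono_of_orderClosedTopology
  have hanti : Antitone x := antitone_nat_of_succ_le hdec
  have hzero : (0 : B) ∈ closure (convexHull ℝ (range x)) :=
    mem_closure_convexHull_range_of_forall_tendsto fun l => by simpa using hweak l
  rw [Metric.tendsto_atTop]
  intro ε hε
  obtain ⟨y, hy, hyε⟩ := Metric.mem_closure_iff.mp hzero ε hε
  obtain ⟨M, hM⟩ := exists_le_of_mem_convexHull_range hanti hy
  refine ⟨M, fun n hn => ?_⟩
  rw [dist_zero_right, norm_norm]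
  calc ‖x n‖ ≤ ‖x M‖ := norm_le_norm_of_nonneg_of_le (hpos n) (hanti hn)
    _ ≤ ‖y‖ := norm_le_norm_of_nonneg_of_le (hpos M) hM
    _ < ε := by rwa [dist_zero_left] at hyε
end

section
/- Assume the continuum hypothesis. Let I be a set whose cardinality equals that of the continuum, and let μ be a probability measure on the measurable space (I, 𝔓(I)), where 𝔓(I) is the power set σ-algebra. Then there exists a countable set S ⊆ I with μ(I ∖ S) = 0; consequently μ(A) = Σ_{ω ∈ S ∩ A} μ({ω}) for every A ⊆ I, i.e., μ is a countable weighted sum of Dirac measures. -/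
/-!
Under CH the set `I` has cardinality `ℵ₁`. The points of positive mass form a countable set `S`
(a finite measure has only countably many disjoint sets of positive measure), and `μ` restricted
to `Sᶜ` is an atomless finite measure defined on all subsets of a set of size `ℵ₁`, so it vanishes
by Ulam's theorem. For the latter, order `I` in type `ω₁`, inject the predecessors of each `β`
into `ℕ` by some `f β`, and put `A n α = {β > α | f β α = n}`. For fixed `n` these sets are
disjoint, so only countably many of them have positive measure; for fixed `α` their union misses
only the countably many `β ≤ α`, hence is conull. An `α` outside the countably many exceptions
therefore forces the measure to vanish.
-/

open MeasureTheory Set Cardinal Function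

universe u v

theorem Cardinal.aleph_one_eq_continuum_iff :
    (ℵ₁ : Cardinal.{u}) = 𝔠 ↔ (ℵ₁ : Cardinal.{v}) = 𝔠 := by
  rw [← lift_inj.{u, v}, ← lift_inj.{v, u} (a := ℵ₁)]
  simp

structure IsUlamMatrix {I : Type*} (A : ℕ → I → Set I) : Prop where
  pairwise_disjoint (n : ℕ) : Pairwise (Disjoint on A n)
  countable_compl_iUnion (α : I) : (⋃ n, A n α)ᶜ.Countable

namespace IsUlamMatrix

theorem exists_of_countable_Iio {I : Type*} [LinearOrder I] (hI : ∀ α : I, (Iio α).Countable) :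
    ∃ A : ℕ → I → Set I, IsUlamMatrix A := by
  choose f hf using fun β => Set.countable_iff_exists_injective.mp (hI β)
  refine ⟨fun n α => {β | ∃ h : α < β, f β ⟨α, h⟩ = n}, fun n α α' hne => ?_, fun α => ?_⟩
  · refine disjoint_left.mpr fun β ⟨h, hα⟩ ⟨h', hα'⟩ => hne ?_
    exact congrArg Subtype.val (hf β (hα.trans hα'.symm))
  · refine ((hI α).insert α).mono fun β hβ => ?_
    simp only [mem_compl_iff, mem_iUnion, mem_ofPred_eq, not_exists] at hβ
    rw [Iio_insert]
    exact not_lt.mp fun h => hβ _ h rfl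

theorem comap {I J : Type*} {A : ℕ → J → Set J} (hA : IsUlamMatrix A) {e : I → J}
    (he : Injective e) : IsUlamMatrix fun n α => e ⁻¹' A n (e α) := by
  refine ⟨fun n α α' hne => ?_, fun α => ?_⟩
  · exact (hA.pairwise_disjoint n (he.ne hne)).preimage e
  · simpa only [← preimage_iUnion, ← preimage_compl] using
      (hA.countable_compl_iUnion (e α)).preimage he

theorem exists_of_mk_le_aleph_one {I : Type u} (hI : #I ≤ ℵ₁) :
    ∃ A : ℕ → I → Set I, IsUlamMatrix A := by
  obtain ⟨e⟩ : Nonempty (I ↪ (ℵ₁ : Cardinal.{u}).ord.ToType) := by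
    rwa [← le_def, mk_toType, card_ord]
  obtain ⟨A, hA⟩ := exists_of_countable_Iio (I := (ℵ₁ : Cardinal.{u}).ord.ToType) fun α => by
    have hα := mk_Iio_lt α (by rw [mk_toType, card_ord, Ordinal.type_toType])
    rw [mk_toType, card_ord, lt_aleph_one_iff] at hα
    exact le_aleph0_iff_set_countable.mp hα
  exact ⟨_, hA.comap e.injective⟩

end IsUlamMatrix

namespace MeasureTheory.Measure

variable {I : Type*} [MeasurableSpace I]

theorem eq_zero_of_isUlamMatrix [DiscreteMeasurableSpace I] {A : ℕ → I → Set I}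
    (hA : IsUlamMatrix A) (ν : Measure I) [SFinite ν] [NullSingletonClass ν] : ν = 0 := by
  have hbad : ∀ n, {α | 0 < ν (A n α)}.Countable := fun n =>
    countable_meas_pos_of_disjoint_iUnion (fun α => .of_discrete) (hA.pairwise_disjoint n)
  rw [← measure_univ_eq_zero]
  by_cases hcover : ⋃ n, {α | 0 < ν (A n α)} = Set.univ
  · exact hcover ▸ (countable_iUnion hbad).measure_zero ν
  obtain ⟨α, hα⟩ := nonempty_compl.mpr hcover
  simp only [mem_compl_iff, mem_iUnion, mem_ofPred_eq, not_exists, not_lt,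
    nonpos_iff_eq_zero] at hα
  rw [← union_compl_self (⋃ n, A n α)]
  exact measure_union_null (measure_iUnion_null hα) ((hA.countable_compl_iUnion α).measure_zero ν)

theorem eq_zero_of_mk_le_aleph_one [DiscreteMeasurableSpace I] (hI : #I ≤ ℵ₁) (ν : Measure I)
    [SFinite ν] [NullSingletonClass ν] : ν = 0 :=
  have ⟨_, hA⟩ := IsUlamMatrix.exists_of_mk_le_aleph_one hI
  eq_zero_of_isUlamMatrix hA ν

theorem countable_setOf_measure_singleton_ne_zero [MeasurableSingletonClass I] (μ : Measure I)
    [SFinite μ] : {ω | μ {ω} ≠ 0}.Countable := by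
  simpa only [pos_iff_ne_zero] using countable_meas_pos_of_disjoint_iUnion (μ := μ)
    (fun ω => measurableSet_singleton ω) fun _ _ hne => disjoint_singleton.mpr hne

theorem nullSingletonClass_restrict [MeasurableSingletonClass I] {μ : Measure I} {s : Set I}
    (hs : ∀ ω ∈ s, μ {ω} = 0) : NullSingletonClass (μ.restrict s) := by
  refine ⟨fun ω => ?_⟩
  rw [restrict_apply (measurableSet_singleton ω)]
  by_cases hω : ω ∈ s
  · exact measure_mono_null inter_subset_left (hs ω hω)
  · rw [singleton_inter_eq_empty.mpr hω, measure_empty]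

theorem measure_eq_tsum_inter_of_countable [MeasurableSingletonClass I] {μ : Measure I}
    {S : Set I} (hS : S.Countable) (hSc : μ Sᶜ = 0) (A : Set I) :
    μ A = ∑' ω : (S ∩ A : Set I), μ {ω.1} := by
  rw [← measure_inter_conull (s := A) hSc, inter_comm]
  exact (tsum_measure_preimage_singleton (f := id) (hS.mono inter_subset_left)
    fun ω _ => measurableSet_singleton ω).symm

end MeasureTheory.Measure

/-- Assuming the continuum hypothesis, every probability measure on the power set of a set
of cardinality continuum is a countable weighted sum of Dirac measures: there is a countable
set `S` carrying the full mass and `μ(A) = Σ_{ω ∈ S ∩ A} μ({ω})` for every `A`. -/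
theorem probabilityMeasure_discrete_of_CH
    (hCH : Cardinal.aleph 1 = Cardinal.continuum)
    {I : Type*} [MeasurableSpace I] (htop : ∀ A : Set I, MeasurableSet A)
    (hI : Cardinal.mk I = Cardinal.continuum)
    (μ : Measure I) (hμ : IsProbabilityMeasure μ) :
    ∃ S : Set I, S.Countable ∧ μ Sᶜ = 0 ∧
      ∀ A : Set I, μ A = ∑' ω : (S ∩ A : Set I), μ {ω.1} := by
  have : DiscreteMeasurableSpace I := ⟨htop⟩
  set S : Set I := {ω | μ {ω} ≠ 0}
  have hS : S.Countable := Measure.countable_setOf_measure_singleton_ne_zero μ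
  have : NullSingletonClass (μ.restrict Sᶜ) :=
    Measure.nullSingletonClass_restrict fun _ => not_not.mp
  have hI_le : #I ≤ ℵ₁ := (hI.trans (aleph_one_eq_continuum_iff.mp hCH).symm).le
  have hSc : μ Sᶜ = 0 :=
    Measure.restrict_eq_zero.mp (Measure.eq_zero_of_mk_le_aleph_one hI_le _)
  exact ⟨S, hS, hSc, Measure.measure_eq_tsum_inter_of_countable hS hSc⟩
end

section
/- Let 𝒜 ⊆ ℒ^∞ be convex and closed in the weak topology τ. Then 𝒜 is 𝒫-sensitive. -/
open MeasureTheory Filter Topology Set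

/- Take `𝒬` to be all probability measures dominated by `c`. A basic `τ`-neighbourhood of `X` is
cut out by finitely many `μᵢ ∈ ca_c`, and for any `P₀ ∈ Pr` the normalisation `Q` of
`P₀ + ∑ |μᵢ|` lies in `𝒬`. The `Y ∈ 𝒜` with `X = Y` `Q`-a.s. then has `∫ Y dμᵢ = ∫ X dμᵢ` for
all `i`, so `X` lies in the `τ`-closure of `𝒜`, which is `𝒜`. -/

theorem mem_closure_iInf_induced {α ι : Type*} {β : ι → Type*} [∀ i, TopologicalSpace (β i)]
    (f : ∀ i, α → β i) {A : Set α} {x : α}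
    (h : ∀ s : Finset ι, ∃ y ∈ A, ∀ i ∈ s, f i y = f i x) :
    x ∈ @closure α (⨅ i, TopologicalSpace.induced (f i) inferInstance) A := by
  let : TopologicalSpace α := ⨅ i, TopologicalSpace.induced (f i) inferInstance
  rw [mem_closure_iff_nhds]
  intro U hU
  simp only [nhds_iInf, nhds_induced, Filter.mem_iInf] at hU
  obtain ⟨I, hI, V, hV, rfl⟩ := hU
  obtain ⟨y, hyA, hy⟩ := h hI.toFinset
  refine ⟨y, mem_iInter.2 fun i => ?_, hyA⟩
  obtain ⟨W, hW, hWV⟩ := Filter.mem_comap.1 (hV i)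
  apply hWV
  rw [mem_preimage, hy i (hI.mem_toFinset.2 i.2)]
  exact mem_of_mem_nhds hW

namespace MeasureTheory.SignedMeasure

variable {Ω : Type*} [MeasurableSpace Ω]

theorem totalVariation_eq_zero_of_forall_subset (μ : SignedMeasure Ω) {A : Set Ω}
    (hA : MeasurableSet A) (h : ∀ B, MeasurableSet B → B ⊆ A → μ B = 0) :
    μ.totalVariation A = 0 := by
  obtain ⟨i, hi, _, _, hpos, hneg⟩ := μ.toJordanDecomposition_spec
  rw [totalVariation, Measure.add_apply, hpos, hneg, toMeasureOfZeroLE_apply _ _ _ hA,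
    toMeasureOfLEZero_apply _ _ _ hA]
  simp [h (i ∩ A) (hi.inter hA) inter_subset_right,
    h (iᶜ ∩ A) (hi.compl.inter hA) inter_subset_right]

theorem mDomC_totalVariation {Pr : Set (Measure Ω)} {μ : SignedMeasure Ω} (hμ : sDomC Pr μ) :
    mDomC Pr μ.totalVariation := fun _ hA hA0 =>
  μ.totalVariation_eq_zero_of_forall_subset hA fun B hB hBA =>
    hμ B hB fun P hP => measure_mono_null hBA (hA0 P hP)

theorem sInt_congr_ae {μ : SignedMeasure Ω} {f g : Ω → ℝ} (h : f =ᵐ[μ.totalVariation] g) :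
    sInt μ f = sInt μ g := by
  obtain ⟨hpos, hneg⟩ :=
    (μ.totalVariation_absolutelyContinuous_iff μ.totalVariation).1 Measure.AbsolutelyContinuous.rfl
  rw [sInt, sInt, integral_congr_ae (hpos.ae_eq h), integral_congr_ae (hneg.ae_eq h)]

end MeasureTheory.SignedMeasure

open ProbabilityTheory in
theorem exists_isProbabilityMeasure_mDomC_dominating {Ω ι : Type*} [MeasurableSpace Ω]
    {Pr : Set (Measure Ω)} {P₀ : Measure Ω} (hP₀ : P₀ ∈ Pr) [IsFiniteMeasure P₀] [NeZero P₀]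
    (m : ι → Measure Ω) [∀ i, IsFiniteMeasure (m i)] (hm : ∀ i, mDomC Pr (m i)) (s : Finset ι) :
    ∃ Q : Measure Ω, IsProbabilityMeasure Q ∧ mDomC Pr Q ∧ ∀ i ∈ s, m i ≪ Q := by
  set ν : Measure Ω := P₀ + ∑ i ∈ s, m i
  have hν : ∀ A, ν A = 0 ↔ P₀ A = 0 ∧ ∀ i ∈ s, m i A = 0 := fun A => by
    simp [ν, Measure.add_apply, Measure.finsetSum_apply]
  refine ⟨ν[|univ], cond_isProbabilityMeasure ?_, ?_, fun i hi => ?_⟩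
  · exact fun h0 => Measure.measure_univ_ne_zero.2 (NeZero.ne P₀) ((hν univ).1 h0).1
  · intro A hA hA0
    exact cond_absolutelyContinuous
      ((hν A).2 ⟨hA0 P₀ hP₀, fun i _ => hm i A hA hA0⟩)
  · refine Measure.AbsolutelyContinuous.trans (fun A hA => ?_) absolutelyContinuous_cond_univ
    exact ((hν A).1 hA).2 i hi

theorem pSensitive_of_weaklyClosed_general
    {Ω : Type*} [MeasurableSpace Ω] (Pr : Set (Measure Ω))
    (hne : Pr.Nonempty) (hprob : ∀ P ∈ Pr, IsProbabilityMeasure P)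
    (𝒜 : Set (boundedMeasurable Ω))
    (hclosed : @IsClosed _ (tauTop Ω Pr) 𝒜) :
    PSensitive Pr 𝒜 := by
  obtain ⟨P₀, hP₀⟩ := hne
  have := hprob P₀ hP₀
  refine ⟨{Q | IsProbabilityMeasure Q ∧ mDomC Pr Q}, fun Q hQ => hQ, fun X hX => ?_⟩
  let := tauTop Ω Pr
  rw [← hclosed.closure_eq]
  refine mem_closure_iInf_induced _ fun s => ?_
  obtain ⟨Q, hQ, hQdom, hac⟩ := exists_isProbabilityMeasure_mDomC_dominating hP₀
    (fun μ : caC Ω Pr => μ.1.totalVariation) (fun μ => SignedMeasure.mDomC_totalVariation μ.2) s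
  obtain ⟨Y, hY, hXY⟩ := hX Q ⟨hQ, hQdom⟩
  exact ⟨Y, hY, fun μ hμ => SignedMeasure.sInt_congr_ae ((hac μ hμ).ae_eq hXY.symm)⟩

/-- Every convex subset of `ℒ^∞` that is closed in the weak topology `τ = σ(ℒ^∞, ca_c)`
is `Pr`-sensitive. -/
theorem pSensitive_of_weaklyClosed
    {Ω : Type*} [MeasurableSpace Ω] (Pr : Set (Measure Ω))
    (hne : Pr.Nonempty) (hprob : ∀ P ∈ Pr, IsProbabilityMeasure P)
    (𝒜 : Set (boundedMeasurable Ω)) (hconv : Convex ℝ 𝒜)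
    (hclosed : @IsClosed _ (tauTop Ω Pr) 𝒜) :
    PSensitive Pr 𝒜 :=
  pSensitive_of_weaklyClosed_general Pr hne hprob 𝒜 hclosed
end
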